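/- arXiv:1310.6851 — 6 statements merged into one kernel-verified Lean document; each statement's English description precedes it below -/
import Mathlib

section
/- Under the Assumption, if the Gröbner basis 𝒢 of the G-stable ideal E is reduced, then σ·𝒢 = 𝒢 for every σ ∈ G; moreover every single polynomial in 𝒢 is fixed by every σ ∈ G, so that 𝒢 ⊆ L^G[y_1,…,y_n] and hence A ⊆ L^G. -/
open MvPolynomial
noncomputable section

namespace Derksen

variable {L : Type*} [Field L]

/-- Coefficient-wise action of a group element on a multivariate polynomial
(the variables are fixed). -/
def polyAct (G : Type*) [Group G] [MulSemiringAction G L] {n : ℕ} (σ : G)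
    (f : MvPolynomial (Fin n) L) : MvPolynomial (Fin n) L :=
  MvPolynomial.map (MulSemiringAction.toRingHom G L σ) f

/-- The Derksen ideal `D_{a_1,…,a_n} = ⋂_{σ ∈ G} (y_1 − σ·a_1, …, y_n − σ·a_n)`. -/
def derksenIdeal (G : Type*) [Group G] [MulSemiringAction G L] {n : ℕ}
    (a : Fin n → L) : Ideal (MvPolynomial (Fin n) L) :=
  ⨅ σ : G, Ideal.span (Set.range fun i => X i - C (σ • a i))

/-- The leading monomial of a multivariate polynomial with respect to a
monomial order (it is `0` for the zero polynomial). -/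
def lm {n : ℕ} (m : MonomialOrder (Fin n)) {S : Type*} [CommSemiring S]
    (f : MvPolynomial (Fin n) S) : Fin n →₀ ℕ :=
  m.toSyn.symm (f.support.sup fun d => m.toSyn d)

/-- The leading coefficient with respect to a monomial order. -/
def lc {n : ℕ} (m : MonomialOrder (Fin n)) {S : Type*} [CommSemiring S]
    (f : MvPolynomial (Fin n) S) : S :=
  f.coeff (lm m f)

/-- A (finite) Gröbner basis of an ideal of a polynomial ring over a field,
with respect to a monomial order: it consists of nonzero elements of the ideal,
generates it, and the leading monomial of every nonzero element of the ideal is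
divisible by the leading monomial of some basis element. -/
structure IsGroebnerBasis {n : ℕ} (m : MonomialOrder (Fin n))
    (E : Ideal (MvPolynomial (Fin n) L)) (B : Finset (MvPolynomial (Fin n) L)) : Prop where
  zero_not_mem : (0 : MvPolynomial (Fin n) L) ∉ B
  subset : (B : Set (MvPolynomial (Fin n) L)) ⊆ E
  span_eq : Ideal.span (B : Set (MvPolynomial (Fin n) L)) = E
  lm_dvd : ∀ f ∈ E, f ≠ 0 → ∃ g ∈ B, lm m g ≤ lm m f

/-- A reduced Gröbner basis: all elements are monic and no monomial occurring in
a basis element is divisible by the leading monomial of another basis element. -/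
structure IsReducedGroebnerBasis {n : ℕ} (m : MonomialOrder (Fin n))
    (E : Ideal (MvPolynomial (Fin n) L)) (B : Finset (MvPolynomial (Fin n) L))
    extends IsGroebnerBasis m E B : Prop where
  monic : ∀ g ∈ B, lc m g = 1
  reduced : ∀ g ∈ B, ∀ g' ∈ B, g' ≠ g → ∀ d ∈ g.support, ¬ lm m g' ≤ d

/-- The `K`-subalgebra of `L` (as a subring) generated by the coefficients of
the polynomials of `B`. -/
def coeffAlgebra (K : Subring L) {n : ℕ} (B : Finset (MvPolynomial (Fin n) L)) :
    Subring L :=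
  Subring.closure (↑K ∪ {x : L | ∃ g ∈ B, ∃ d : Fin n →₀ ℕ, coeff d g = x})

end Derksen

namespace Derksen

theorem lm_mem_support {L : Type*} [Field L] {n : ℕ} (m : MonomialOrder (Fin n))
    {f : MvPolynomial (Fin n) L} (hf : f ≠ 0) : lm m f ∈ f.support := by
  obtain ⟨d, hd, hsup⟩ := Finset.exists_mem_eq_sup f.support
    (MvPolynomial.support_nonempty.mpr hf) (fun d => m.toSyn d)
  unfold lm
  rw [hsup, AddEquiv.symm_apply_apply]
  exact hd

theorem toSyn_le_lm {L : Type*} [Field L] {n : ℕ} (m : MonomialOrder (Fin n))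
    {f : MvPolynomial (Fin n) L} {d : Fin n →₀ ℕ} (hd : d ∈ f.support) :
    m.toSyn d ≤ m.toSyn (lm m f) := by
  unfold lm
  rw [AddEquiv.apply_symm_apply]
  exact Finset.le_sup hd

theorem mem_fixedSubfield {L G : Type*} [Field L] [Group G] [MulSemiringAction G L]
    {x : L} (hx : ∀ σ : G, σ • x = x) : x ∈ FixedPoints.subfield G L := by
  have : x ∈ (FixedPoints.subfield G L : Set L) := by
    rw [FixedPoints.subfield, Subfield.coe_copy]
    exact hx
  exact this

/-- Under the Assumption, if `B` is a reduced Gröbner basis of the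
`G`-stable ideal `E`, then `σ · B = B` for every `σ ∈ G`; moreover every polynomial
in `B` is fixed by every `σ ∈ G`, so all its coefficients lie in `L^G` and hence
the coefficient algebra `A` is contained in `L^G`. -/
theorem statement0 {L G : Type*} [Field L] [Group G] [MulSemiringAction G L]
    {n : ℕ} (K : Subring L) (a : Fin n → L)
    (hK : ∀ (σ : G), ∀ x ∈ K, σ • x = x)
    (R : Subring L) (hR : R = Subring.closure (↑K ∪ Set.range a))
    (hRstable : ∀ (σ : G), ∀ x ∈ R, σ • x ∈ R)
    (hQuot : ∀ x : L, ∃ r ∈ R, ∃ s ∈ R, s ≠ 0 ∧ x = r / s)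
    (E : Ideal (MvPolynomial (Fin n) L))
    (hEproper : E ≠ ⊤)
    (hDE : derksenIdeal G a ≤ E)
    (hEstable : ∀ (σ : G), ∀ f ∈ E, polyAct G σ f ∈ E)
    (m : MonomialOrder (Fin n)) (B : Finset (MvPolynomial (Fin n) L))
    (hB : IsReducedGroebnerBasis m E B) :
    (∀ σ : G, polyAct G σ '' (B : Set (MvPolynomial (Fin n) L)) = B) ∧
    (∀ σ : G, ∀ g ∈ B, polyAct G σ g = g) ∧
    (∀ g ∈ B, ∀ d : Fin n →₀ ℕ, coeff d g ∈ FixedPoints.subfield G L) ∧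
    (coeffAlgebra K B ≤ (FixedPoints.subfield G L).toSubring) := by
  -- coefficient formula for the action
  have hcoeff : ∀ (σ : G) (g : MvPolynomial (Fin n) L) (d : Fin n →₀ ℕ),
      coeff d (polyAct G σ g) = σ • coeff d g := by
    intro σ g d
    simp [polyAct, coeff_map]
  -- the key claim : every element of B is fixed
  have key : ∀ (σ : G), ∀ g ∈ B, polyAct G σ g = g := by
    intro σ g hg
    have hg0 : g ≠ 0 := fun h => hB.zero_not_mem (h ▸ hg)
    by_contra hne
    set h : MvPolynomial (Fin n) L := polyAct G σ g - g with hh_def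
    have hh0 : h ≠ 0 := sub_ne_zero.mpr hne
    have hhE : h ∈ E := E.sub_mem (hEstable σ g (hB.subset hg)) (hB.subset hg)
    -- support of h is contained in support of g
    have hsubh : h.support ⊆ g.support := by
      intro d hd
      rw [MvPolynomial.mem_support_iff] at hd ⊢
      intro hdg
      apply hd
      rw [hh_def, coeff_sub, hcoeff, hdg, smul_zero, sub_zero]
    -- the leading coefficient of g is 1, so lm g cancels in h
    have hlc : coeff (lm m g) h = 0 := by
      have hmonic : coeff (lm m g) g = 1 := hB.monic g hg
      rw [hh_def, coeff_sub, hcoeff, hmonic, smul_one, sub_self]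
    have hdh : lm m h ∈ h.support := lm_mem_support m hh0
    have hdhg : lm m h ∈ g.support := hsubh hdh
    have hlmne : lm m h ≠ lm m g := by
      intro heq
      rw [MvPolynomial.mem_support_iff, heq] at hdh
      exact hdh hlc
    obtain ⟨g'', hg'', hdvd⟩ := hB.lm_dvd h hhE hh0
    by_cases hgg : g'' = g
    · subst hgg
      apply hlmne
      apply m.toSyn.injective
      exact le_antisymm (toSyn_le_lm m hdhg) (m.toSyn_monotone hdvd)
    · exact hB.reduced g hg g'' hg'' hgg (lm m h) hdhg hdvd
  -- coefficients are fixed points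
  have hcf : ∀ g ∈ B, ∀ d : Fin n →₀ ℕ, coeff d g ∈ FixedPoints.subfield G L := by
    intro g hg d
    apply mem_fixedSubfield
    intro σ
    rw [← hcoeff σ g d, key σ g hg]
  refine ⟨?_, key, hcf, ?_⟩
  · intro σ
    apply Set.Subset.antisymm
    · rintro x ⟨g, hg, rfl⟩
      rw [key σ g hg]
      exact hg
    · intro g hg
      exact ⟨g, hg, key σ g hg⟩
  · rw [coeffAlgebra]
    apply Subring.closure_le.mpr
    rintro x (hx | ⟨g, hg, d, rfl⟩)
    · exact mem_fixedSubfield fun σ => hK σ x hx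
    · exact hcf g hg d

end Derksen
end
end

section
/- (Invariant field.) Under the Assumption, suppose in addition that E is a tamely extended Derksen ideal. Then the invariant field L^G equals the field of fractions Quot(A) of the K-algebra A generated by the coefficients of the polynomials in the reduced Gröbner basis 𝒢 of E. -/
open MvPolynomial
noncomputable section

namespace Derksen

/-- The ideal `I = {f(a_1,…,a_n) : f ∈ K[y_1,…,y_n] ∩ E}` of `R`, as a subset of `L`. -/
def tameSet {L : Type*} [Field L] (K : Subring L) {n : ℕ} (a : Fin n → L)
    (E : Ideal (MvPolynomial (Fin n) L)) : Set L :=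
  {x : L | ∃ f ∈ E, (∀ d : Fin n →₀ ℕ, coeff d f ∈ K) ∧ eval a f = x}

/-- `E` is a tamely extended Derksen ideal: `⋂_{σ ∈ G} σ·I` is nilpotent,
where `I = {f(a_1,…,a_n) : f ∈ K[y_1,…,y_n] ∩ E}`. -/
def IsTame {L : Type*} [Field L] (G : Type*) [Group G] [MulSemiringAction G L]
    (K : Subring L) {n : ℕ} (a : Fin n → L)
    (E : Ideal (MvPolynomial (Fin n) L)) : Prop :=
  ∀ x : L, (∀ σ : G, ∃ y ∈ tameSet K a E, σ • y = x) → IsNilpotent x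

/-! The coefficients of a reduced Gröbner basis of a `G`-stable ideal are `G`-invariant: `σ • g`
lies in `E`, has the support of `g` and leading coefficient `1`, so it equals `g`. Hence
`Quot(A) ⊆ L^G`.

Conversely let `x = r / s ∈ L^G` with `r, s ∈ R`. Tameness gives `σ` and a `K`-polynomial
`q ∉ E` with `q(a) = σ • s`; pick a `K`-polynomial `p` with `p(a) = σ • r`. Then `p - x q`
has invariant coefficients and vanishes at `a`, hence at every `σ • a`, so it lies in the Derksen
ideal and thus in `E`. Division by the Gröbner basis keeps coefficients in `A`; the remainder of
`p - x q` is a normal form in `E`, hence zero, so `x` is a quotient of coefficients of the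
remainders of `p` and `q`, the latter being nonzero because `q ∉ E`. -/

section Polynomials

variable {σ R : Type*} [CommRing R]

theorem sub_C_eval_mem_span_X_sub_C (c : σ → R) (f : MvPolynomial σ R) :
    f - C (eval c f) ∈ Ideal.span (Set.range fun i => X i - C (c i)) := by
  induction f using MvPolynomial.induction_on with
  | C r => simp
  | add p q hp hq =>
    rw [map_add, map_add, add_sub_add_comm]
    exact add_mem hp hq
  | mul_X p i hp =>
    have key : p * X i - C (eval c (p * X i)) =
        p * (X i - C (c i)) + (p - C (eval c p)) * C (c i) := by
      rw [eval_mul, eval_X, map_mul]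
      ring
    rw [key]
    exact add_mem (Ideal.mul_mem_left _ _ (Ideal.subset_span ⟨i, rfl⟩))
      (Ideal.mul_mem_right _ _ hp)

theorem mem_span_X_sub_C_of_eval_eq_zero {c : σ → R} {f : MvPolynomial σ R}
    (hf : eval c f = 0) :
    f ∈ Ideal.span (Set.range fun i => X i - C (c i)) := by
  simpa [hf] using sub_C_eval_mem_span_X_sub_C c f

theorem exists_coeff_mem_eval_eq_of_mem_closure {K : Subring R} {a : σ → R} {x : R}
    (hx : x ∈ Subring.closure (↑K ∪ Set.range a)) :
    ∃ p : MvPolynomial σ R, (∀ d, coeff d p ∈ K) ∧ eval a p = x := by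
  have hx' : x ∈ Algebra.adjoin K (Set.range a) := by
    have hK : Set.range (algebraMap K R) = K := Subtype.range_coe
    rwa [Algebra.mem_adjoin_iff, hK]
  rw [Algebra.adjoin_range_eq_range_aeval] at hx'
  obtain ⟨p, rfl⟩ := hx'
  exact ⟨map K.subtype p, fun d => by simp [coeff_map], by rw [eval_map]; rfl⟩

theorem exists_map_subtype_eq {A : Subring R} {f : MvPolynomial σ R}
    (hf : ∀ d, coeff d f ∈ A) : ∃ f' : MvPolynomial σ A, map A.subtype f' = f := by
  rw [← Set.mem_range, mem_range_map_iff_coeffs_subset]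
  intro c hc
  obtain ⟨d, -, rfl⟩ := mem_coeffs_iff.mp hc
  exact ⟨⟨_, hf d⟩, rfl⟩

end Polynomials

section MonomialOrder

variable {σ R S : Type*} (m : MonomialOrder σ)

theorem _root_.MonomialOrder.degree_map_of_injective [CommSemiring R] [CommSemiring S]
    {φ : R →+* S} (hφ : Function.Injective φ) (f : MvPolynomial σ R) :
    m.degree (map φ f) = m.degree f := by
  unfold MonomialOrder.degree
  rw [support_map_of_injective _ hφ]

theorem _root_.MonomialOrder.leadingCoeff_map_of_injective [CommSemiring R] [CommSemiring S]
    {φ : R →+* S} (hφ : Function.Injective φ) (f : MvPolynomial σ R) :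
    m.leadingCoeff (map φ f) = φ (m.leadingCoeff f) := by
  rw [MonomialOrder.leadingCoeff, m.degree_map_of_injective hφ, coeff_map,
    MonomialOrder.leadingCoeff]

theorem _root_.MonomialOrder.exists_sub_mem_span_coeff_mem [CommRing R] {A : Subring R}
    {B : Set (MvPolynomial σ R)} (hmonic : ∀ b ∈ B, m.Monic b)
    (hBA : ∀ b ∈ B, ∀ d, coeff d b ∈ A) {f : MvPolynomial σ R}
    (hfA : ∀ d, coeff d f ∈ A) :
    ∃ r, f - r ∈ Ideal.span B ∧ (∀ c ∈ r.support, ∀ b ∈ B, ¬ m.degree b ≤ c) ∧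
      ∀ d, coeff d r ∈ A := by
  set φ : MvPolynomial σ A →+* MvPolynomial σ R := map A.subtype
  have hA : Function.Injective A.subtype := A.subtype_injective
  have hB' : ∀ b ∈ φ ⁻¹' B, IsUnit (m.leadingCoeff b) := by
    intro b hb
    have hb1 : m.leadingCoeff (φ b) = 1 := hmonic _ hb
    rw [m.leadingCoeff_map_of_injective hA, ← A.subtype.map_one] at hb1
    rw [hA hb1]
    exact isUnit_one
  obtain ⟨f', rfl⟩ := exists_map_subtype_eq hfA
  obtain ⟨g, r, hf', -, hr⟩ := m.div_set hB' f'
  refine ⟨φ r, ?_, ?_, fun d => by simp [φ, coeff_map]⟩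
  · have hspan : f' - r ∈ Ideal.span (φ ⁻¹' B) := by
      rw [hf', add_sub_cancel_right, Finsupp.linearCombination_apply]
      exact Ideal.sum_mem _ fun b _ => Ideal.mul_mem_left _ _ (Ideal.subset_span b.2)
    rw [← map_sub]
    refine Ideal.span_mono (Set.image_preimage_subset φ B) ?_
    rw [← Ideal.map_span]
    exact Ideal.mem_map_of_mem φ hspan
  · intro c hc b hb
    rw [support_map_of_injective _ hA] at hc
    obtain ⟨b', rfl⟩ := exists_map_subtype_eq (hBA b hb)
    rw [m.degree_map_of_injective hA]
    exact hr c hc b' hb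

end MonomialOrder

section Groebner

variable {L : Type*} [Field L] {n : ℕ} {m : MonomialOrder (Fin n)}
  {E : Ideal (MvPolynomial (Fin n) L)} {B : Finset (MvPolynomial (Fin n) L)}

theorem IsGroebnerBasis.eq_zero_of_mem (hB : IsGroebnerBasis m E B)
    {f : MvPolynomial (Fin n) L} (hf : f ∈ E)
    (hnf : ∀ c ∈ f.support, ∀ b ∈ B, ¬ m.degree b ≤ c) : f = 0 := by
  by_contra hne
  obtain ⟨b, hb, hle⟩ := hB.lm_dvd f hf hne
  exact hnf _ ((m.degree_mem_support_iff f).mpr hne) b hb hle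

theorem IsGroebnerBasis.exists_div_eq_of_sub_C_mul_mem (hB : IsGroebnerBasis m E B)
    (hmonic : ∀ b ∈ B, m.Monic b) {A : Subring L} (hBA : ∀ b ∈ B, ∀ d, coeff d b ∈ A)
    {p q : MvPolynomial (Fin n) L} (hpA : ∀ d, coeff d p ∈ A) (hqA : ∀ d, coeff d q ∈ A)
    (hq : q ∉ E) {x : L} (hx : p - C x * q ∈ E) :
    ∃ b ∈ A, ∃ c ∈ A, c ≠ 0 ∧ x = b / c := by
  obtain ⟨p', hp, hp'nf, hp'A⟩ := m.exists_sub_mem_span_coeff_mem hmonic hBA hpA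
  obtain ⟨q', hq', hq'nf, hq'A⟩ := m.exists_sub_mem_span_coeff_mem hmonic hBA hqA
  rw [hB.span_eq] at hp hq'
  have hq'0 : q' ≠ 0 := by
    rintro rfl
    exact hq (by simpa using hq')
  have hzero : p' - C x * q' = 0 := by
    refine hB.eq_zero_of_mem ?_ fun c hc b hb => ?_
    · have key : p' - C x * q' = (p - C x * q) - (p - p') + C x * (q - q') := by ring
      rw [key]
      exact add_mem (sub_mem hx hp) (E.mul_mem_left _ hq')
    · classical
      rcases Finset.mem_union.mp (support_sub _ _ _ hc) with hc | hc
      · exact hp'nf c hc b hb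
      · rw [C_mul'] at hc
        exact hq'nf c (support_smul hc) b hb
  obtain ⟨d, hd⟩ := support_nonempty.mpr hq'0
  have hd0 : coeff d q' ≠ 0 := mem_support_iff.mp hd
  refine ⟨coeff d p', hp'A d, coeff d q', hq'A d, hd0, ?_⟩
  have hcoeff := congrArg (coeff d) hzero
  rw [coeff_sub, coeff_C_mul, coeff_zero, sub_eq_zero] at hcoeff
  rw [hcoeff, mul_div_cancel_right₀ _ hd0]

theorem IsReducedGroebnerBasis.eq_of_mem (hB : IsReducedGroebnerBasis m E B)
    {g h : MvPolynomial (Fin n) L} (hg : g ∈ B) (hh : h ∈ E) (hsupp : h.support ⊆ g.support)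
    (hlead : coeff (m.degree g) h = 1) : h = g := by
  have hmonic : coeff (m.degree g) g = 1 := hB.monic g hg
  rw [← sub_eq_zero]
  by_contra hne
  obtain ⟨u, hu, hle⟩ := hB.lm_dvd (h - g) (E.sub_mem hh (hB.subset hg)) hne
  have hmem := (m.degree_mem_support_iff _).mpr hne
  have hdeg : m.degree (h - g) ∈ g.support := by
    classical
    exact Finset.union_subset hsupp subset_rfl (support_sub _ _ _ hmem)
  rcases eq_or_ne u g with rfl | hug
  -- the leading terms of `h` and `g` cancel, so `h - g` cannot have the degree of `g`
  · have heq : m.degree (h - u) = m.degree u :=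
      m.toSyn.injective (le_antisymm (m.le_degree hdeg) (m.toSyn_monotone hle))
    rw [heq, mem_support_iff, coeff_sub, hlead, hmonic, sub_self] at hmem
    exact hmem rfl
  · exact hB.reduced g hg u hu hug _ hdeg hle

end Groebner

section Action

variable {L G : Type*} [Field L] [Group G] [MulSemiringAction G L] {n : ℕ}

theorem coeff_polyAct (σ : G) (f : MvPolynomial (Fin n) L) (d : Fin n →₀ ℕ) :
    coeff d (polyAct G σ f) = σ • coeff d f :=
  coeff_map _ _ _

theorem support_polyAct (σ : G) (f : MvPolynomial (Fin n) L) :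
    (polyAct G σ f).support = f.support :=
  support_map_of_injective _ (MulSemiringAction.toRingHom G L σ).injective

theorem eval_polyAct (σ : G) (c : Fin n → L) (f : MvPolynomial (Fin n) L) :
    eval (σ • c) (polyAct G σ f) = σ • eval c f := by
  rw [polyAct, eval_map, ← eval₂_id (g := c) f]
  exact (eval₂_comp_left (MulSemiringAction.toRingHom G L σ) (RingHom.id L) c f).symm

theorem polyAct_eq_self_iff {σ : G} {f : MvPolynomial (Fin n) L} :
    polyAct G σ f = f ↔ ∀ d, σ • coeff d f = coeff d f := by
  simp only [MvPolynomial.ext_iff, coeff_polyAct]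

theorem IsReducedGroebnerBasis.polyAct_eq_self {m : MonomialOrder (Fin n)}
    {E : Ideal (MvPolynomial (Fin n) L)} {B : Finset (MvPolynomial (Fin n) L)}
    (hB : IsReducedGroebnerBasis m E B) (hE : ∀ σ : G, ∀ f ∈ E, polyAct G σ f ∈ E)
    (σ : G) {g : MvPolynomial (Fin n) L} (hg : g ∈ B) : polyAct G σ g = g := by
  refine hB.eq_of_mem hg (hE σ g (hB.subset hg)) (support_polyAct σ g).subset ?_
  rw [coeff_polyAct]
  exact (congrArg (σ • ·) (hB.monic g hg)).trans (smul_one σ)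

theorem coeffAlgebra_le_fixedPoints {K : Subring L} (hK : ∀ σ : G, ∀ x ∈ K, σ • x = x)
    {m : MonomialOrder (Fin n)} {E : Ideal (MvPolynomial (Fin n) L)}
    {B : Finset (MvPolynomial (Fin n) L)} (hB : IsReducedGroebnerBasis m E B)
    (hE : ∀ σ : G, ∀ f ∈ E, polyAct G σ f ∈ E) :
    coeffAlgebra K B ≤ (FixedPoints.subfield G L).toSubring := by
  refine Subring.closure_le.mpr ?_
  rintro x (hx | ⟨g, hg, d, rfl⟩) σ
  · exact hK σ x hx
  · rw [← coeff_polyAct, hB.polyAct_eq_self hE σ hg]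

theorem mem_derksenIdeal_of_eval_eq_zero {a : Fin n → L} {f : MvPolynomial (Fin n) L}
    (hf : ∀ σ : G, polyAct G σ f = f) (h0 : eval a f = 0) : f ∈ derksenIdeal G a := by
  refine Ideal.mem_iInf.mpr fun σ => mem_span_X_sub_C_of_eval_eq_zero ?_
  rw [← hf σ]
  exact (eval_polyAct σ a f).trans (by rw [h0, smul_zero])

theorem sub_C_mul_mem_derksenIdeal {K : Subring L} (hK : ∀ σ : G, ∀ y ∈ K, σ • y = y)
    {a : Fin n → L} {x : L} (hx : ∀ σ : G, σ • x = x) {p q : MvPolynomial (Fin n) L}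
    (hpK : ∀ d, coeff d p ∈ K) (hqK : ∀ d, coeff d q ∈ K) (hpq : eval a p = x * eval a q) :
    p - C x * q ∈ derksenIdeal G a := by
  refine mem_derksenIdeal_of_eval_eq_zero (fun σ => ?_) (by simp [hpq])
  rw [polyAct_eq_self_iff]
  intro d
  rw [coeff_sub, coeff_C_mul, smul_sub, smul_mul', hx, hK σ _ (hpK d), hK σ _ (hqK d)]

theorem IsTame.exists_notMem_of_ne_zero {K : Subring L} {a : Fin n → L}
    {E : Ideal (MvPolynomial (Fin n) L)} (hTame : IsTame G K a E) {s : L}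
    (hs : ∀ σ : G, σ • s ∈ Subring.closure (↑K ∪ Set.range a)) (hs0 : s ≠ 0) :
    ∃ σ : G, ∃ q : MvPolynomial (Fin n) L,
      (∀ d, coeff d q ∈ K) ∧ eval a q = σ • s ∧ q ∉ E := by
  by_contra! h
  refine hs0 (hTame s fun τ => ?_).eq_zero
  obtain ⟨q, hqK, hq⟩ := exists_coeff_mem_eval_eq_of_mem_closure (hs τ⁻¹)
  exact ⟨τ⁻¹ • s, ⟨q, h τ⁻¹ q hqK hq, hqK, hq⟩, smul_inv_smul τ s⟩

end Action

theorem statement1_general {L G : Type*} [Field L] [Group G] [MulSemiringAction G L]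
    {n : ℕ} (K : Subring L) (a : Fin n → L)
    (hK : ∀ (σ : G), ∀ x ∈ K, σ • x = x)
    (R : Subring L) (hR : R = Subring.closure (↑K ∪ Set.range a))
    (hRstable : ∀ (σ : G), ∀ x ∈ R, σ • x ∈ R)
    (hQuot : ∀ x : L, ∃ r ∈ R, ∃ s ∈ R, s ≠ 0 ∧ x = r / s)
    (E : Ideal (MvPolynomial (Fin n) L))
    (hDE : derksenIdeal G a ≤ E)
    (hEstable : ∀ (σ : G), ∀ f ∈ E, polyAct G σ f ∈ E)
    (hTame : IsTame G K a E)
    (m : MonomialOrder (Fin n)) (B : Finset (MvPolynomial (Fin n) L))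
    (hB : IsReducedGroebnerBasis m E B) :
    (FixedPoints.subfield G L : Set L) =
      {x : L | ∃ b ∈ coeffAlgebra K B, ∃ c ∈ coeffAlgebra K B, c ≠ 0 ∧ x = b / c} := by
  subst hR
  have hfixed := coeffAlgebra_le_fixedPoints hK hB hEstable
  have hKA : ∀ y ∈ K, y ∈ coeffAlgebra K B := fun y hy => Subring.subset_closure (Or.inl hy)
  ext x
  constructor
  · intro hx
    obtain ⟨r, hr, s, hs, hs0, rfl⟩ := hQuot x
    obtain ⟨σ, q, hqK, hq, hqE⟩ := hTame.exists_notMem_of_ne_zero (hRstable · s hs) hs0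
    obtain ⟨p, hpK, hp⟩ := exists_coeff_mem_eval_eq_of_mem_closure (hRstable σ r hr)
    have hpq : eval a p = r / s * eval a q := by
      rw [hp, hq, ← hx σ, ← smul_mul', div_mul_cancel₀ r hs0]
    exact hB.exists_div_eq_of_sub_C_mul_mem hB.monic
      (fun b hb d => Subring.subset_closure (Or.inr ⟨b, hb, d, rfl⟩))
      (fun d => hKA _ (hpK d)) (fun d => hKA _ (hqK d)) hqE
      (hDE (sub_C_mul_mem_derksenIdeal hK hx hpK hqK hpq))
  · rintro ⟨b, hb, c, hc, -, rfl⟩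
    exact div_mem (hfixed hb) (hfixed hc)

/-- **Invariant field.** Under the Assumption, if `E` is a tamely
extended Derksen ideal, then `L^G = Quot(A)`. -/
theorem statement1 {L G : Type*} [Field L] [Group G] [MulSemiringAction G L]
    {n : ℕ} (K : Subring L) (a : Fin n → L)
    (hK : ∀ (σ : G), ∀ x ∈ K, σ • x = x)
    (R : Subring L) (hR : R = Subring.closure (↑K ∪ Set.range a))
    (hRstable : ∀ (σ : G), ∀ x ∈ R, σ • x ∈ R)
    (hQuot : ∀ x : L, ∃ r ∈ R, ∃ s ∈ R, s ≠ 0 ∧ x = r / s)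
    (E : Ideal (MvPolynomial (Fin n) L))
    (hEproper : E ≠ ⊤)
    (hDE : derksenIdeal G a ≤ E)
    (hEstable : ∀ (σ : G), ∀ f ∈ E, polyAct G σ f ∈ E)
    (hTame : IsTame G K a E)
    (m : MonomialOrder (Fin n)) (B : Finset (MvPolynomial (Fin n) L))
    (hB : IsReducedGroebnerBasis m E B) :
    (FixedPoints.subfield G L : Set L) =
      {x : L | ∃ b ∈ coeffAlgebra K B, ∃ c ∈ coeffAlgebra K B, c ≠ 0 ∧ x = b / c} :=
  statement1_general K a hK R hR hRstable hQuot E hDE hEstable hTame m B hB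

end Derksen
end
end

section
/- (Invariantization.) Under the Assumption, the invariantization map φ_𝒢 : R → A is well defined (independent of the choice of polynomial representative) and is a homomorphism of R^G-modules; it restricts to the identity on R^G. If in addition R^G_a = A_a holds for some nonzero a ∈ R^G with A ⊆ R_a, then φ_𝒢 extends uniquely to an R_a^G-linear projection R_a ↠ R_a^G, and in particular R_a^G is a direct summand of R_a as an R_a^G-module. -/
open MvPolynomial
noncomputable section

namespace Derksen

/-- The localization `S_u = S[u⁻¹]` of a subring `S ⊆ L` at an element `u`,
realized as a subring of `L`. -/
def locAt {L : Type*} [Field L] (S : Subring L) (u : L) : Subring L :=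
  Subring.closure (↑S ∪ {u⁻¹})

/-- `f ∈ K[y_1,…,y_n]` represents `b`: all coefficients of `f` lie in `K` and
`f(a_1,…,a_n) = b`. -/
def Represents {L : Type*} [Field L] (K : Subring L) {n : ℕ} (a : Fin n → L)
    (b : L) (f : MvPolynomial (Fin n) L) : Prop :=
  (∀ d : Fin n →₀ ℕ, coeff d f ∈ K) ∧ eval a f = b

/-- `r` is the normal form of `f` with respect to the Gröbner basis `B`:
`f ≡ r` modulo the ideal generated by `B`, and no monomial occurring in `r` is
divisible by the leading monomial of an element of `B`. -/
def IsNormalForm {L : Type*} [Field L] {n : ℕ} (m : MonomialOrder (Fin n))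
    (B : Finset (MvPolynomial (Fin n) L)) (f r : MvPolynomial (Fin n) L) : Prop :=
  f - r ∈ Ideal.span (B : Set (MvPolynomial (Fin n) L)) ∧
    ∀ d ∈ r.support, ∀ g ∈ B, ¬ lm m g ≤ d

/-- `φ` is the invariantization map `φ_𝒢 : R → A`: for `b ∈ R` written as
`b = f(a_1,…,a_n)` with `f ∈ K[y_1,…,y_n]`, `φ b` is the normal form of `f`
with all variables `y_i` set to zero. -/
def IsInvariantization {L : Type*} [Field L] (K : Subring L) {n : ℕ}
    (a : Fin n → L) (m : MonomialOrder (Fin n))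
    (B : Finset (MvPolynomial (Fin n) L)) (φ : L → L) : Prop :=
  ∀ (b : L) (f r : MvPolynomial (Fin n) L), Represents K a b f →
    IsNormalForm m B f r → φ b = eval (0 : Fin n → L) r

end Derksen

/-!
Two `K`-representatives of the same `b ∈ R` take the same value `σ • b` at every point `σ • a`,
so their difference lies in the Derksen ideal, hence in `E`, and their normal forms coincide:
`φ` is well defined. If `c ∈ R^G` is represented by `f`, then `f - c` vanishes at every `σ • a`,
so `f ≡ c` modulo `E`; hence the normal form of `f` is the constant `c` (there are no constants
in a proper `E`), and multiplying a normal form by the constant `c` keeps it reduced, which makes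
`φ` the identity on `R^G` and `R^G`-linear. Since `B` is monic, division by `B` can be carried out
over `A`, so `φ` takes values in `A`. On `R_{a₀}` the map `x ↦ φ (x a₀ᵏ) / a₀ᵏ` does not depend
on `k` by `R^G`-linearity, and it is the only `R^G_{a₀}`-linear map extending `φ`.
-/

theorem MonomialOrder.degree_map_of_injective_s3 {σ R S : Type*} [CommSemiring R] [CommSemiring S]
    (m : MonomialOrder σ) {f : R →+* S} (hf : Function.Injective f) (p : MvPolynomial σ R) :
    m.degree (map f p) = m.degree p := by
  classical
  simp only [MonomialOrder.degree, support_map_of_injective p hf]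

theorem MvPolynomial.exists_map_subtype_eq {σ L : Type*} [CommRing L] {A : Subring L}
    {f : MvPolynomial σ L} (hf : ∀ d, coeff d f ∈ A) :
    ∃ f' : MvPolynomial σ A, map A.subtype f' = f := by
  classical
  refine mem_range_map_iff_coeffs_subset.mpr fun x hx => ?_
  obtain ⟨d, -, rfl⟩ := mem_coeffs_iff.mp hx
  exact ⟨⟨_, hf d⟩, rfl⟩

theorem MvPolynomial.sub_C_eval_mem_span_X_sub_C {σ L : Type*} [CommRing L] (c : σ → L)
    (f : MvPolynomial σ L) : f - C (eval c f) ∈ Ideal.span (Set.range fun i => X i - C (c i)) := by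
  induction f using MvPolynomial.induction_on with
  | C a => simp
  | add p q hp hq =>
    convert add_mem hp hq using 1
    rw [map_add, C_add]; ring
  | mul_X p i hp =>
    convert add_mem (Ideal.mul_mem_right (C (c i)) _ hp)
      (Ideal.mul_mem_right p _ (Ideal.subset_span ⟨i, rfl⟩)) using 1
    rw [map_mul, eval_X, C_mul]; ring

namespace Derksen

section NormalForm

variable {L : Type*} [Field L] {n : ℕ} {m : MonomialOrder (Fin n)}
  {E : Ideal (MvPolynomial (Fin n) L)} {B : Finset (MvPolynomial (Fin n) L)}
  {f f' r r' : MvPolynomial (Fin n) L}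

theorem lm_eq_degree {S : Type*} [CommSemiring S] (f : MvPolynomial (Fin n) S) :
    lm m f = m.degree f :=
  rfl

theorem IsGroebnerBasis.eq_of_sub_mem (hB : IsGroebnerBasis m E B) (hrr' : r - r' ∈ E)
    (hr : ∀ d ∈ r.support, ∀ g ∈ B, ¬ lm m g ≤ d)
    (hr' : ∀ d ∈ r'.support, ∀ g ∈ B, ¬ lm m g ≤ d) : r = r' := by
  by_contra hne
  have h0 : r - r' ≠ 0 := sub_ne_zero.mpr hne
  obtain ⟨g, hg, hle⟩ := hB.lm_dvd _ hrr' h0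
  rcases Finset.mem_union.mp (support_sub (Fin n) r r' (m.degree_mem_support h0)) with h | h
  · exact hr _ h g hg hle
  · exact hr' _ h g hg hle

theorem IsGroebnerBasis.lm_ne_zero (hB : IsGroebnerBasis m E B) (hE : E ≠ ⊤)
    {g : MvPolynomial (Fin n) L} (hg : g ∈ B) : lm m g ≠ 0 := by
  intro h0
  have hgC : g = C (m.leadingCoeff g) := m.eq_C_of_degree_eq_zero h0
  have hc : m.leadingCoeff g ≠ 0 := fun hc => hB.zero_not_mem (by rwa [hgC, hc, C_0] at hg)
  refine hE (Ideal.eq_top_of_isUnit_mem _ (hB.subset hg) ?_)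
  rw [hgC]
  exact hc.isUnit.map C

theorem IsGroebnerBasis.isNormalForm_C (hB : IsGroebnerBasis m E B) (hE : E ≠ ⊤) {c : L}
    (hf : f - C c ∈ E) : IsNormalForm m B f (C c) := by
  refine ⟨hB.span_eq ▸ hf, fun d hd g hg hle => hB.lm_ne_zero hE hg ?_⟩
  have hd0 : d = 0 := by
    by_contra h
    exact mem_support_iff.mp hd (by rw [coeff_C, if_neg (Ne.symm h)])
  exact le_zero_iff.mp (hd0 ▸ hle)

theorem IsNormalForm.add (h : IsNormalForm m B f r) (h' : IsNormalForm m B f' r') :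
    IsNormalForm m B (f + f') (r + r') := by
  refine ⟨by convert add_mem h.1 h'.1 using 1; ring, fun d hd g hg hle => ?_⟩
  rcases Finset.mem_union.mp (support_add hd) with hd | hd
  · exact h.2 d hd g hg hle
  · exact h'.2 d hd g hg hle

theorem IsNormalForm.mul_of_sub_C_mem (h : IsNormalForm m B f r) {g : MvPolynomial (Fin n) L}
    {c : L} (hg : g - C c ∈ Ideal.span (B : Set (MvPolynomial (Fin n) L))) :
    IsNormalForm m B (g * f) (C c * r) := by
  refine ⟨?_, fun d hd => h.2 d (by rw [C_mul'] at hd; exact support_smul hd)⟩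
  convert add_mem (Ideal.mul_mem_right f _ hg) (Ideal.mul_mem_left _ (C c) h.1) using 1
  ring

theorem exists_isNormalForm_of_coeff_mem (A : Subring L) (hmonic : ∀ g ∈ B, lc m g = 1)
    (hBA : ∀ g ∈ B, ∀ d, coeff d g ∈ A) (hf : ∀ d, coeff d f ∈ A) :
    ∃ r, IsNormalForm m B f r ∧ ∀ d, coeff d r ∈ A := by
  classical
  set ι := map (σ := Fin n) A.subtype
  have hι : Function.Injective A.subtype := Subtype.val_injective
  have hunit : ∀ b ∈ ι ⁻¹' B, IsUnit (m.leadingCoeff b) := fun b hb => by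
    have h1 : lc m (ι b) = 1 := hmonic _ hb
    rw [lc, lm_eq_degree, m.degree_map_of_injective_s3 hι, coeff_map] at h1
    rw [MonomialOrder.leadingCoeff, show coeff (m.degree b) b = 1 from hι (by simpa using h1)]
    exact isUnit_one
  obtain ⟨f', rfl⟩ := exists_map_subtype_eq hf
  obtain ⟨g, r', hdiv, -, hr'⟩ := m.div_set hunit f'
  refine ⟨ι r', ⟨?_, fun d hd b hb => ?_⟩, fun d => by simp [ι, coeff_map]⟩
  · have hlc := LinearMap.mem_range_self
      (Finsupp.linearCombination _ fun b : ι ⁻¹' B => (b : MvPolynomial (Fin n) A)) g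
    rw [Finsupp.range_linearCombination, Subtype.range_coe] at hlc
    have hmap := Ideal.mem_map_of_mem ι hlc
    rw [Ideal.map_span] at hmap
    rw [hdiv, map_add, add_sub_cancel_right]
    exact Ideal.span_mono (Set.image_preimage_subset _ _) hmap
  · obtain ⟨b', rfl⟩ := exists_map_subtype_eq (hBA b hb)
    rw [support_map_of_injective _ hι] at hd
    rw [lm_eq_degree, m.degree_map_of_injective_s3 hι]
    exact hr' d hd b' hb

end NormalForm

section Representatives

variable {L G : Type*} [Field L] [Group G] [MulSemiringAction G L] {n : ℕ} {K : Subring L}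
  {a : Fin n → L} {b c : L} {f f' : MvPolynomial (Fin n) L}

theorem exists_represents (hb : b ∈ Subring.closure (↑K ∪ Set.range a)) :
    ∃ f, Represents K a b f := by
  let ρ := (eval a).comp (map (σ := Fin n) K.subtype)
  have hle : Subring.closure (↑K ∪ Set.range a) ≤ ρ.range := by
    refine Subring.closure_le.mpr (Set.union_subset (fun x hx => ⟨C ⟨x, hx⟩, by simp [ρ]⟩) ?_)
    rintro _ ⟨i, rfl⟩
    exact ⟨X i, by simp [ρ]⟩
  obtain ⟨p, rfl⟩ := hle hb
  exact ⟨map K.subtype p, fun d => by simp [coeff_map], rfl⟩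

theorem Represents.add (hf : Represents K a b f) (hf' : Represents K a c f') :
    Represents K a (b + c) (f + f') :=
  ⟨fun d => by rw [coeff_add]; exact add_mem (hf.1 d) (hf'.1 d), by rw [map_add, hf.2, hf'.2]⟩

theorem Represents.mul (hf : Represents K a b f) (hf' : Represents K a c f') :
    Represents K a (b * c) (f * f') :=
  ⟨fun d => by rw [coeff_mul]; exact sum_mem fun _ _ => mul_mem (hf.1 _) (hf'.1 _),
    by rw [map_mul, hf.2, hf'.2]⟩

theorem Represents.eval_smul {σ : G} (hK : ∀ x ∈ K, σ • x = x) (hf : Represents K a b f) :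
    eval (fun i => σ • a i) f = σ • b := by
  let τ := MulSemiringAction.toRingHom G L σ
  have hfix : map τ f = f := by
    ext d
    exact hK _ (hf.1 d)
  calc eval (fun i => σ • a i) f = eval (τ ∘ a) (map τ f) := by rw [hfix]; rfl
    _ = τ (eval a f) := by rw [eval_map, ← eval₂_id, eval₂_comp_left, RingHom.comp_id]
    _ = σ • b := by rw [hf.2]; rfl

theorem sub_mem_derksenIdeal
    (h : ∀ σ : G, eval (fun i => σ • a i) f = eval (fun i => σ • a i) f') :
    f - f' ∈ derksenIdeal G a := by
  refine Ideal.mem_iInf.mpr fun σ => ?_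
  simpa [h σ] using sub_C_eval_mem_span_X_sub_C (fun i => σ • a i) (f - f')

theorem Represents.sub_mem_derksenIdeal (hK : ∀ σ : G, ∀ x ∈ K, σ • x = x)
    (hf : Represents K a b f) (hf' : Represents K a b f') : f - f' ∈ derksenIdeal G a :=
  Derksen.sub_mem_derksenIdeal fun σ => by rw [hf.eval_smul (hK σ), hf'.eval_smul (hK σ)]

theorem Represents.sub_C_mem_derksenIdeal (hK : ∀ σ : G, ∀ x ∈ K, σ • x = x)
    (hf : Represents K a b f) (hb : ∀ σ : G, σ • b = b) : f - C b ∈ derksenIdeal G a :=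
  Derksen.sub_mem_derksenIdeal fun σ => by rw [hf.eval_smul (hK σ), eval_C, hb]

end Representatives

section Invariantization

variable {L G : Type*} [Field L] [Group G] [MulSemiringAction G L] {n : ℕ} {K : Subring L}
  {a : Fin n → L} {E : Ideal (MvPolynomial (Fin n) L)} {m : MonomialOrder (Fin n)}
  {B : Finset (MvPolynomial (Fin n) L)} {b c : L} {f f' r r' : MvPolynomial (Fin n) L}
  {φ : L → L}

theorem IsNormalForm.eq_of_represents (hK : ∀ σ : G, ∀ x ∈ K, σ • x = x)
    (hDE : derksenIdeal G a ≤ E) (hB : IsGroebnerBasis m E B) (hf : Represents K a b f)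
    (hf' : Represents K a b f') (hr : IsNormalForm m B f r) (hr' : IsNormalForm m B f' r') :
    r = r' := by
  have hff' := hDE (hf.sub_mem_derksenIdeal hK hf')
  refine hB.eq_of_sub_mem ?_ hr.2 hr'.2
  rw [← hB.span_eq] at hff' ⊢
  convert sub_mem (add_mem hff' hr'.1) hr.1 using 1
  ring

open Classical in
/-- Off `R`, where `b` has no representative, the value `0` is junk. -/
def invariantization (K : Subring L) (a : Fin n → L) (m : MonomialOrder (Fin n))
    (B : Finset (MvPolynomial (Fin n) L)) (b : L) : L :=
  if h : ∃ r, ∃ f, Represents K a b f ∧ IsNormalForm m B f r then eval 0 h.choose else 0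

theorem isInvariantization_invariantization (hK : ∀ σ : G, ∀ x ∈ K, σ • x = x)
    (hDE : derksenIdeal G a ≤ E) (hB : IsGroebnerBasis m E B) :
    IsInvariantization K a m B (invariantization K a m B) := by
  intro b f r hf hr
  have h : ∃ r, ∃ f, Represents K a b f ∧ IsNormalForm m B f r := ⟨r, f, hf, hr⟩
  obtain ⟨f₀, hf₀, hr₀⟩ := h.choose_spec
  rw [invariantization, dif_pos h, hr₀.eq_of_represents hK hDE hB hf₀ hf hr]

theorem exists_represents_isNormalForm (hmonic : ∀ g ∈ B, lc m g = 1)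
    (hb : b ∈ Subring.closure (↑K ∪ Set.range a)) :
    ∃ f r, Represents K a b f ∧ IsNormalForm m B f r ∧ ∀ d, coeff d r ∈ coeffAlgebra K B := by
  obtain ⟨f, hf⟩ := exists_represents hb
  obtain ⟨r, hr, hrA⟩ := exists_isNormalForm_of_coeff_mem (coeffAlgebra K B) hmonic
    (fun g hg d => Subring.subset_closure (Or.inr ⟨g, hg, d, rfl⟩))
    (fun d => Subring.subset_closure (Or.inl (hf.1 d)))
  exact ⟨f, r, hf, hr, hrA⟩

theorem IsInvariantization.apply_mem_coeffAlgebra (hφ : IsInvariantization K a m B φ)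
    (hmonic : ∀ g ∈ B, lc m g = 1) (hb : b ∈ Subring.closure (↑K ∪ Set.range a)) :
    φ b ∈ coeffAlgebra K B := by
  obtain ⟨f, r, hf, hr, hrA⟩ := exists_represents_isNormalForm hmonic hb
  rw [hφ b f r hf hr, eval_zero, constantCoeff_eq]
  exact hrA 0

theorem IsInvariantization.apply_add (hφ : IsInvariantization K a m B φ)
    (hmonic : ∀ g ∈ B, lc m g = 1) (hb : b ∈ Subring.closure (↑K ∪ Set.range a))
    (hc : c ∈ Subring.closure (↑K ∪ Set.range a)) : φ (b + c) = φ b + φ c := by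
  obtain ⟨f, r, hf, hr, -⟩ := exists_represents_isNormalForm hmonic hb
  obtain ⟨f', r', hf', hr', -⟩ := exists_represents_isNormalForm hmonic hc
  rw [hφ _ _ _ (hf.add hf') (hr.add hr'), hφ _ _ _ hf hr, hφ _ _ _ hf' hr', map_add]

theorem IsInvariantization.apply_mul_of_fixed (hφ : IsInvariantization K a m B φ)
    (hK : ∀ σ : G, ∀ x ∈ K, σ • x = x) (hDE : derksenIdeal G a ≤ E)
    (hB : IsReducedGroebnerBasis m E B) (hc : c ∈ Subring.closure (↑K ∪ Set.range a))
    (hb : b ∈ Subring.closure (↑K ∪ Set.range a)) (hcfix : ∀ σ : G, σ • c = c) :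
    φ (c * b) = c * φ b := by
  obtain ⟨fc, hfc⟩ := exists_represents hc
  obtain ⟨fb, rb, hfb, hrb, -⟩ := exists_represents_isNormalForm hB.monic hb
  have hfcr : fc - C c ∈ Ideal.span (B : Set (MvPolynomial (Fin n) L)) :=
    hB.span_eq ▸ hDE (hfc.sub_C_mem_derksenIdeal hK hcfix)
  rw [hφ _ _ _ (hfc.mul hfb) (hrb.mul_of_sub_C_mem hfcr), hφ _ _ _ hfb hrb, map_mul, eval_C]

theorem IsInvariantization.apply_of_fixed (hφ : IsInvariantization K a m B φ)
    (hK : ∀ σ : G, ∀ x ∈ K, σ • x = x) (hDE : derksenIdeal G a ≤ E)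
    (hB : IsGroebnerBasis m E B) (hE : E ≠ ⊤) (hb : b ∈ Subring.closure (↑K ∪ Set.range a))
    (hbfix : ∀ σ : G, σ • b = b) : φ b = b := by
  obtain ⟨f, hf⟩ := exists_represents hb
  rw [hφ _ _ _ hf (hB.isNormalForm_C hE (hDE (hf.sub_C_mem_derksenIdeal hK hbfix))), eval_C]

end Invariantization

section Localization

variable {L : Type*} [Field L] {S T : Subring L} {u x y : L} {φ : L → L}

theorem le_locAt (S : Subring L) (u : L) : S ≤ locAt S u :=
  fun _ hx => Subring.subset_closure (Or.inl hx)

theorem inv_pow_mem_locAt (S : Subring L) (u : L) (k : ℕ) : (u ^ k)⁻¹ ∈ locAt S u := by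
  rw [← inv_pow]
  exact pow_mem (Subring.subset_closure (Or.inr rfl) : u⁻¹ ∈ locAt S u) k

theorem mem_locAt_iff (huS : u ∈ S) (hu : u ≠ 0) : x ∈ locAt S u ↔ ∃ k : ℕ, x * u ^ k ∈ S := by
  constructor
  · intro hx
    induction hx using Subring.closure_induction with
    | mem y hy =>
      rcases hy with hy | rfl
      · exact ⟨0, by simpa using hy⟩
      · exact ⟨1, by simp [inv_mul_cancel₀ hu]⟩
    | zero => exact ⟨0, by simp⟩
    | one => exact ⟨0, by simp⟩
    | add y z _ _ hy hz =>
      obtain ⟨k, hk⟩ := hy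
      obtain ⟨j, hj⟩ := hz
      refine ⟨k + j, ?_⟩
      convert add_mem (mul_mem hk (pow_mem huS j)) (mul_mem hj (pow_mem huS k)) using 1
      ring
    | neg y _ hy =>
      obtain ⟨k, hk⟩ := hy
      exact ⟨k, by simpa using neg_mem hk⟩
    | mul y z _ _ hy hz =>
      obtain ⟨k, hk⟩ := hy
      obtain ⟨j, hj⟩ := hz
      exact ⟨k + j, by convert mul_mem hk hj using 1; ring⟩
  · rintro ⟨k, hk⟩
    have hx : x = x * u ^ k * (u ^ k)⁻¹ := by field_simp
    rw [hx]
    exact mul_mem (le_locAt S u hk) (inv_pow_mem_locAt S u k)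

open Classical in
/-- `φ (x * u ^ k) / u ^ k` does not depend on the choice of `k` as soon as `φ` is linear over
a subring containing `u` (`locExtend_eq`). -/
def locExtend (S : Subring L) (u : L) (φ : L → L) (x : L) : L :=
  if h : ∃ k : ℕ, x * u ^ k ∈ S then φ (x * u ^ h.choose) / u ^ h.choose else 0

theorem locExtend_eq (huT : u ∈ T) (hu : u ≠ 0)
    (hlin : ∀ t ∈ T, ∀ b ∈ S, φ (t * b) = t * φ b) {k : ℕ} (hk : x * u ^ k ∈ S) :
    locExtend S u φ x = φ (x * u ^ k) / u ^ k := by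
  have h : ∃ k : ℕ, x * u ^ k ∈ S := ⟨k, hk⟩
  rw [locExtend, dif_pos h, div_eq_div_iff (pow_ne_zero _ hu) (pow_ne_zero _ hu)]
  have hj := hlin _ (pow_mem huT k) _ h.choose_spec
  rw [show u ^ k * (x * u ^ h.choose) = u ^ h.choose * (x * u ^ k) by ring,
    hlin _ (pow_mem huT _) _ hk] at hj
  linear_combination -hj

theorem locExtend_of_mem (huT : u ∈ T) (hu : u ≠ 0)
    (hlin : ∀ t ∈ T, ∀ b ∈ S, φ (t * b) = t * φ b) (hx : x ∈ S) : locExtend S u φ x = φ x := by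
  rw [locExtend_eq huT hu hlin (k := 0) (by simpa using hx)]
  simp

theorem locExtend_add (hTS : T ≤ S) (huT : u ∈ T) (hu : u ≠ 0)
    (hlin : ∀ t ∈ T, ∀ b ∈ S, φ (t * b) = t * φ b)
    (hadd : ∀ b ∈ S, ∀ c ∈ S, φ (b + c) = φ b + φ c) (hx : x ∈ locAt S u) (hy : y ∈ locAt S u) :
    locExtend S u φ (x + y) = locExtend S u φ x + locExtend S u φ y := by
  have huS := hTS huT
  obtain ⟨k, hk⟩ := (mem_locAt_iff huS hu).mp hx
  obtain ⟨j, hj⟩ := (mem_locAt_iff huS hu).mp hy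
  have hk' : x * u ^ (k + j) ∈ S := by
    convert mul_mem hk (pow_mem huS j) using 1; ring
  have hj' : y * u ^ (k + j) ∈ S := by
    convert mul_mem hj (pow_mem huS k) using 1; ring
  rw [locExtend_eq huT hu hlin hk', locExtend_eq huT hu hlin hj',
    locExtend_eq huT hu hlin (k := k + j) (by rw [add_mul]; exact add_mem hk' hj'), add_mul,
    hadd _ hk' _ hj', add_div]

theorem locExtend_mul (hTS : T ≤ S) (huT : u ∈ T) (hu : u ≠ 0)
    (hlin : ∀ t ∈ T, ∀ b ∈ S, φ (t * b) = t * φ b) (hy : y ∈ locAt T u) (hx : x ∈ locAt S u) :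
    locExtend S u φ (y * x) = y * locExtend S u φ x := by
  obtain ⟨j, hj⟩ := (mem_locAt_iff huT hu).mp hy
  obtain ⟨k, hk⟩ := (mem_locAt_iff (hTS huT) hu).mp hx
  have hyx : y * x * u ^ (j + k) = y * u ^ j * (x * u ^ k) := by ring
  rw [locExtend_eq huT hu hlin hk, locExtend_eq huT hu hlin (k := j + k)
    (by rw [hyx]; exact mul_mem (hTS hj) hk), hyx, hlin _ hj _ hk]
  field_simp [pow_ne_zero _ hu]
  ring

theorem existsUnique_locAt_extension (hTS : T ≤ S) (huT : u ∈ T) (hu : u ≠ 0)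
    (hadd : ∀ b ∈ S, ∀ c ∈ S, φ (b + c) = φ b + φ c)
    (hlin : ∀ t ∈ T, ∀ b ∈ S, φ (t * b) = t * φ b) (hφT : ∀ b ∈ S, φ b ∈ locAt T u)
    (hφid : ∀ t ∈ T, φ t = t) :
    ∃! ψ : ↥(locAt S u) → L,
      (∀ x y : ↥(locAt S u), ψ (x + y) = ψ x + ψ y) ∧
      (∀ c x : ↥(locAt S u), (c : L) ∈ locAt T u → ψ (c * x) = (c : L) * ψ x) ∧
      (∀ x : ↥(locAt S u), ψ x ∈ locAt T u) ∧
      (∀ x : ↥(locAt S u), (x : L) ∈ locAt T u → ψ x = x) ∧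
      (∀ b ∈ S, ∀ hb : b ∈ locAt S u, ψ ⟨b, hb⟩ = φ b) := by
  have huS := hTS huT
  refine ⟨fun x => locExtend S u φ x, ⟨fun x y => locExtend_add hTS huT hu hlin hadd x.2 y.2,
    fun c x hc => locExtend_mul hTS huT hu hlin hc x.2, fun x => ?_, fun x hx => ?_,
    fun b hb _ => locExtend_of_mem huT hu hlin hb⟩, ?_⟩
  · obtain ⟨k, hk⟩ := (mem_locAt_iff huS hu).mp x.2
    show locExtend S u φ x ∈ _
    rw [locExtend_eq huT hu hlin hk, div_eq_mul_inv]
    exact mul_mem (hφT _ hk) (inv_pow_mem_locAt T u k)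
  · obtain ⟨k, hk⟩ := (mem_locAt_iff huT hu).mp hx
    show locExtend S u φ x = x
    rw [locExtend_eq huT hu hlin (hTS hk), hφid _ hk]
    field_simp [pow_ne_zero _ hu]
  · rintro ψ ⟨-, hψlin, -, -, hψφ⟩
    funext x
    obtain ⟨k, hk⟩ := (mem_locAt_iff huS hu).mp x.2
    have hx : x = ⟨(u ^ k)⁻¹, inv_pow_mem_locAt S u k⟩ * ⟨_, le_locAt S u hk⟩ := by
      apply Subtype.ext
      rw [Subring.coe_mul]
      field_simp [pow_ne_zero _ hu]
    rw [hx, hψlin _ _ (inv_pow_mem_locAt T u k), hψφ _ hk, ← hx, locExtend_eq huT hu hlin hk,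
      div_eq_inv_mul]

end Localization

theorem statement3_general {L G : Type*} [Field L] [Group G] [MulSemiringAction G L]
    {n : ℕ} (K : Subring L) (a : Fin n → L)
    (hK : ∀ (σ : G), ∀ x ∈ K, σ • x = x)
    (R : Subring L) (hR : R = Subring.closure (↑K ∪ Set.range a))
    (E : Ideal (MvPolynomial (Fin n) L))
    (hEproper : E ≠ ⊤)
    (hDE : derksenIdeal G a ≤ E)
    (m : MonomialOrder (Fin n)) (B : Finset (MvPolynomial (Fin n) L))
    (hB : IsReducedGroebnerBasis m E B) :
    -- the map is well defined …
    (∀ (b : L) (f f' r r' : MvPolynomial (Fin n) L),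
      Represents K a b f → Represents K a b f' →
      IsNormalForm m B f r → IsNormalForm m B f' r' →
      eval (0 : Fin n → L) r = eval (0 : Fin n → L) r') ∧
    -- … and exists,
    (∃ φ : L → L, IsInvariantization K a m B φ) ∧
    -- and any invariantization map has the stated properties:
    ∀ φ : L → L, IsInvariantization K a m B φ →
      ((∀ b ∈ R, φ b ∈ coeffAlgebra K B) ∧
       (∀ b ∈ R, ∀ c ∈ R, φ (b + c) = φ b + φ c) ∧
       (∀ c ∈ R, ∀ b ∈ R, (∀ σ : G, σ • c = c) → φ (c * b) = c * φ b) ∧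
       (∀ b ∈ R, (∀ σ : G, σ • b = b) → φ b = b) ∧
       -- unique extension to an `R_{a₀}^G`-linear projection of `R_{a₀}` onto `R_{a₀}^G`
       (∀ a₀ : L, a₀ ∈ R → (∀ σ : G, σ • a₀ = a₀) → a₀ ≠ 0 →
         (coeffAlgebra K B : Set L) ⊆ ↑(locAt R a₀) →
         locAt (R ⊓ (FixedPoints.subfield G L).toSubring) a₀ =
           locAt (coeffAlgebra K B) a₀ →
         ∃! ψ : ↥(locAt R a₀) → L,
           (∀ u v : ↥(locAt R a₀), ψ (u + v) = ψ u + ψ v) ∧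
           (∀ c u : ↥(locAt R a₀),
             (c : L) ∈ locAt (R ⊓ (FixedPoints.subfield G L).toSubring) a₀ →
             ψ (c * u) = (c : L) * ψ u) ∧
           (∀ u : ↥(locAt R a₀),
             ψ u ∈ locAt (R ⊓ (FixedPoints.subfield G L).toSubring) a₀) ∧
           (∀ u : ↥(locAt R a₀),
             (u : L) ∈ locAt (R ⊓ (FixedPoints.subfield G L).toSubring) a₀ →
             ψ u = u) ∧
           (∀ (b : L) (hb : b ∈ R) (hb' : b ∈ locAt R a₀), ψ ⟨b, hb'⟩ = φ b))) := by
  refine ⟨fun b f f' r r' hf hf' hr hr' => by rw [hr.eq_of_represents hK hDE hB.1 hf hf' hr'],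
    ⟨_, isInvariantization_invariantization hK hDE hB.1⟩, fun φ hφ => ?_⟩
  have hmem : ∀ b ∈ R, φ b ∈ coeffAlgebra K B := fun b hb =>
    hφ.apply_mem_coeffAlgebra hB.monic (hR ▸ hb)
  have hadd : ∀ b ∈ R, ∀ c ∈ R, φ (b + c) = φ b + φ c := fun b hb c hc =>
    hφ.apply_add hB.monic (hR ▸ hb) (hR ▸ hc)
  have hmul : ∀ c ∈ R, ∀ b ∈ R, (∀ σ : G, σ • c = c) → φ (c * b) = c * φ b :=
    fun c hc b hb hcfix => hφ.apply_mul_of_fixed hK hDE hB (hR ▸ hc) (hR ▸ hb) hcfix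
  have hfix : ∀ b ∈ R, (∀ σ : G, σ • b = b) → φ b = b := fun b hb hbfix =>
    hφ.apply_of_fixed hK hDE hB.1 hEproper (hR ▸ hb) hbfix
  refine ⟨hmem, hadd, hmul, hfix, fun a₀ ha₀ ha₀fix ha₀ne _ hloc => ?_⟩
  refine existsUnique_locAt_extension inf_le_left ⟨ha₀, ha₀fix⟩ ha₀ne hadd
    (fun t ht b hb => hmul t ht.1 b hb ht.2) (fun b hb => ?_) (fun t ht => hfix t ht.1 ht.2)
  rw [hloc]
  exact le_locAt _ a₀ (hmem b hb)

/-- **Invariantization.** The invariantization map `φ_𝒢` is a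
well-defined homomorphism of `R^G`-modules with values in `A`, restricting to the
identity on `R^G`.  If `R^G_{a₀} = A_{a₀}` holds for a nonzero invariant
`a₀ ∈ R^G` with `A ⊆ R_{a₀}`, then `φ_𝒢` extends uniquely to an
`R_{a₀}^G`-linear projection `R_{a₀} ↠ R_{a₀}^G`; in particular `R_{a₀}^G` is a
direct summand of `R_{a₀}` as an `R_{a₀}^G`-module. -/
theorem statement3 {L G : Type*} [Field L] [Group G] [MulSemiringAction G L]
    {n : ℕ} (K : Subring L) (a : Fin n → L)
    (hK : ∀ (σ : G), ∀ x ∈ K, σ • x = x)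
    (R : Subring L) (hR : R = Subring.closure (↑K ∪ Set.range a))
    (hRstable : ∀ (σ : G), ∀ x ∈ R, σ • x ∈ R)
    (hQuot : ∀ x : L, ∃ r ∈ R, ∃ s ∈ R, s ≠ 0 ∧ x = r / s)
    (E : Ideal (MvPolynomial (Fin n) L))
    (hEproper : E ≠ ⊤)
    (hDE : derksenIdeal G a ≤ E)
    (hEstable : ∀ (σ : G), ∀ f ∈ E, polyAct G σ f ∈ E)
    (m : MonomialOrder (Fin n)) (B : Finset (MvPolynomial (Fin n) L))
    (hB : IsReducedGroebnerBasis m E B) :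
    -- the map is well defined …
    (∀ (b : L) (f f' r r' : MvPolynomial (Fin n) L),
      Represents K a b f → Represents K a b f' →
      IsNormalForm m B f r → IsNormalForm m B f' r' →
      eval (0 : Fin n → L) r = eval (0 : Fin n → L) r') ∧
    -- … and exists,
    (∃ φ : L → L, IsInvariantization K a m B φ) ∧
    -- and any invariantization map has the stated properties:
    ∀ φ : L → L, IsInvariantization K a m B φ →
      ((∀ b ∈ R, φ b ∈ coeffAlgebra K B) ∧
       (∀ b ∈ R, ∀ c ∈ R, φ (b + c) = φ b + φ c) ∧
       (∀ c ∈ R, ∀ b ∈ R, (∀ σ : G, σ • c = c) → φ (c * b) = c * φ b) ∧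
       (∀ b ∈ R, (∀ σ : G, σ • b = b) → φ b = b) ∧
       -- unique extension to an `R_{a₀}^G`-linear projection of `R_{a₀}` onto `R_{a₀}^G`
       (∀ a₀ : L, a₀ ∈ R → (∀ σ : G, σ • a₀ = a₀) → a₀ ≠ 0 →
         (coeffAlgebra K B : Set L) ⊆ ↑(locAt R a₀) →
         locAt (R ⊓ (FixedPoints.subfield G L).toSubring) a₀ =
           locAt (coeffAlgebra K B) a₀ →
         ∃! ψ : ↥(locAt R a₀) → L,
           (∀ u v : ↥(locAt R a₀), ψ (u + v) = ψ u + ψ v) ∧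
           (∀ c u : ↥(locAt R a₀),
             (c : L) ∈ locAt (R ⊓ (FixedPoints.subfield G L).toSubring) a₀ →
             ψ (c * u) = (c : L) * ψ u) ∧
           (∀ u : ↥(locAt R a₀),
             ψ u ∈ locAt (R ⊓ (FixedPoints.subfield G L).toSubring) a₀) ∧
           (∀ u : ↥(locAt R a₀),
             (u : L) ∈ locAt (R ⊓ (FixedPoints.subfield G L).toSubring) a₀ →
             ψ u = u) ∧
           (∀ (b : L) (hb : b ∈ R) (hb' : b ∈ locAt R a₀), ψ ⟨b, hb'⟩ = φ b))) :=
  statement3_general K a hK R hR E hEproper hDE m B hB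

end Derksen
end
end

section
/- (Invariant ring via unlocalization.) Under the Assumption, suppose B ⊆ R^G is a finitely generated K-subalgebra such that R_a^G = B_a for some nonzero a ∈ B. Define an ascending chain of subalgebras B_0 ⊆ B_1 ⊆ B_2 ⊆ … of R by B_0 := B and B_{k+1} := the subalgebra generated by a^{−1}B_k ∩ R. Then R^G = ∪_{k≥0} B_k. If K is Noetherian, then every B_k is a finitely generated K-algebra. If B_k = B_{k+1} for some k, then R^G = B_k. Conversely, if R^G is finitely generated as a K-algebra, then such a k exists. -/
/-!
Write `A = R^G`. Since `a₀` is invariant and nonzero, `A` is saturated in `R` with respect to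
`a₀` (`x ∈ R` and `a₀ x ∈ A` imply `x ∈ A`), so every `B_k` stays inside `A`. Conversely
every `x ∈ A ⊆ A_{a₀} = B_{a₀}` satisfies `a₀ᵏ x ∈ B` for some `k`, and dividing by `a₀` one
step at a time puts `x` into `B_k`. Each `B_{k+1}` is generated over `B_k` by the
`B_k`-module `a₀⁻¹B_k ∩ R ⊆ B_k a₀⁻¹`, which is finitely generated when `B_k` is Noetherian.
The remaining assertions are properties of increasing unions.
-/

open MvPolynomial
noncomputable section

namespace Derksen

section CommRing

variable {L : Type*} [CommRing L]

def unlocalizationStep (K R : Subring L) (a : L) (S : Subring L) : Subring L :=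
  Subring.closure (↑K ∪ {x | x ∈ R ∧ a * x ∈ S})

def unlocalizationChain (K R : Subring L) (a : L) (B : Subring L) (k : ℕ) : Subring L :=
  (unlocalizationStep K R a)^[k] B

variable {K R A B S : Subring L} {a : L}

theorem mem_unlocalizationStep_of_mul_mem {x : L} (hx : x ∈ R) (hax : a * x ∈ S) :
    x ∈ unlocalizationStep K R a S :=
  Subring.subset_closure (Or.inr ⟨hx, hax⟩)

theorem le_unlocalizationStep_left : K ≤ unlocalizationStep K R a S :=
  fun _ hx => Subring.subset_closure (Or.inl hx)

theorem le_unlocalizationStep (hSR : S ≤ R) (haS : a ∈ S) : S ≤ unlocalizationStep K R a S :=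
  fun _ hx => mem_unlocalizationStep_of_mul_mem (hSR hx) (mul_mem haS hx)

theorem unlocalizationStep_le (hKA : K ≤ A) (hsat : ∀ x ∈ R, a * x ∈ A → x ∈ A) (hSA : S ≤ A) :
    unlocalizationStep K R a S ≤ A :=
  Subring.closure_le.2 <| Set.union_subset hKA fun x hx => hsat x hx.1 (hSA hx.2)

theorem unlocalizationChain_succ (k : ℕ) :
    unlocalizationChain K R a B (k + 1) =
      unlocalizationStep K R a (unlocalizationChain K R a B k) :=
  Function.iterate_succ_apply' _ k B

theorem unlocalizationChain_le (hKA : K ≤ A) (hsat : ∀ x ∈ R, a * x ∈ A → x ∈ A)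
    (hBA : B ≤ A) (k : ℕ) : unlocalizationChain K R a B k ≤ A := by
  induction k with
  | zero => exact hBA
  | succ k ih =>
    rw [unlocalizationChain_succ]
    exact unlocalizationStep_le hKA hsat ih

theorem mem_unlocalizationChain (haR : a ∈ R) (haB : a ∈ B) (k : ℕ) :
    a ∈ unlocalizationChain K R a B k := by
  induction k with
  | zero => exact haB
  | succ k ih =>
    rw [unlocalizationChain_succ]
    exact mem_unlocalizationStep_of_mul_mem haR (mul_mem ih ih)

theorem unlocalizationChain_monotone (hKR : K ≤ R) (hBR : B ≤ R) (haB : a ∈ B) :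
    Monotone (unlocalizationChain K R a B) :=
  monotone_nat_of_le_succ fun k => (unlocalizationChain_succ (K := K) k).symm ▸
    le_unlocalizationStep (unlocalizationChain_le hKR (fun _ hx _ => hx) hBR k)
      (mem_unlocalizationChain (hBR haB) haB k)

theorem mem_unlocalizationChain_of_pow_mul_mem (hAR : A ≤ R) (haA : a ∈ A) (k : ℕ) {x : L}
    (hx : x ∈ A) (hkx : a ^ k * x ∈ B) : x ∈ unlocalizationChain K R a B k := by
  induction k generalizing x with
  | zero =>
    rw [pow_zero, one_mul] at hkx
    exact hkx
  | succ k ih =>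
    rw [unlocalizationChain_succ]
    refine mem_unlocalizationStep_of_mul_mem (hAR hx) (ih (mul_mem haA hx) ?_)
    rwa [← mul_assoc, ← pow_succ]

theorem unlocalizationChain_le_of_eq_succ (hmono : Monotone (unlocalizationChain K R a B))
    {k : ℕ} (hk : unlocalizationChain K R a B k = unlocalizationChain K R a B (k + 1))
    (j : ℕ) : unlocalizationChain K R a B j ≤ unlocalizationChain K R a B k := by
  rcases le_total j k with hjk | hkj
  · exact hmono hjk
  · have hfix : Function.IsFixedPt (unlocalizationStep K R a) (unlocalizationChain K R a B k) :=
      (unlocalizationChain_succ k).symm.trans hk.symm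
    obtain ⟨i, rfl⟩ := Nat.exists_eq_add_of_le' hkj
    exact ((Function.iterate_add_apply _ i k B).trans (hfix.iterate i)).le

theorem eq_unlocalizationChain_of_eq_succ (hmono : Monotone (unlocalizationChain K R a B))
    (hA : (A : Set L) = ⋃ k, (unlocalizationChain K R a B k : Set L)) {k : ℕ}
    (hk : unlocalizationChain K R a B k = unlocalizationChain K R a B (k + 1)) :
    A = unlocalizationChain K R a B k :=
  SetLike.coe_injective <| hA.trans <| subset_antisymm
    (Set.iUnion_subset fun j => unlocalizationChain_le_of_eq_succ hmono hk j)
    (Set.subset_iUnion (fun j => (unlocalizationChain K R a B j : Set L)) k)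

theorem exists_unlocalizationChain_eq_succ (hKB : K ≤ B)
    (hmono : Monotone (unlocalizationChain K R a B))
    (hA : (A : Set L) = ⋃ k, (unlocalizationChain K R a B k : Set L))
    {s : Finset L} (hs : A = Subring.closure (↑K ∪ ↑s)) :
    ∃ k, unlocalizationChain K R a B k = unlocalizationChain K R a B (k + 1) := by
  have hle : ∀ j, unlocalizationChain K R a B j ≤ A := fun j x hx =>
    (hA ▸ Set.mem_iUnion.2 ⟨j, hx⟩ : x ∈ (A : Set L))
  have hsA : (s : Set L) ⊆ ⋃ k, (unlocalizationChain K R a B k : Set L) :=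
    hA ▸ hs ▸ fun x hx => Subring.subset_closure (Or.inr hx)
  have hdir : Directed (· ⊆ ·) fun k => (unlocalizationChain K R a B k : Set L) :=
    Monotone.directed_le fun _ _ hij => SetLike.coe_subset_coe.2 (hmono hij)
  obtain ⟨k, hk⟩ := hdir.exists_mem_subset_of_finset_subset_biUnion hsA
  have hAk : A ≤ unlocalizationChain K R a B k :=
    hs ▸ Subring.closure_le.2 (Set.union_subset (hKB.trans (hmono k.zero_le)) hk)
  exact ⟨k, le_antisymm (hmono k.le_succ) ((hle (k + 1)).trans hAk)⟩

end CommRing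

section Field

variable {L : Type*} [Field L] {K R A B S : Subring L} {a : L}

theorem exists_pow_mul_mem_of_mem_closure_union_inv (ha : a ≠ 0) (haB : a ∈ B) {x : L}
    (hx : x ∈ Subring.closure (↑B ∪ {a⁻¹})) : ∃ k : ℕ, a ^ k * x ∈ B := by
  induction hx using Subring.closure_induction with
  | mem x hx =>
    rcases hx with hx | rfl
    · exact ⟨0, by simpa using hx⟩
    · exact ⟨1, by simp [ha]⟩
  | zero => exact ⟨0, by simp⟩
  | one => exact ⟨0, by simp⟩
  | add x y _ _ hx hy =>
    obtain ⟨i, hi⟩ := hx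
    obtain ⟨j, hj⟩ := hy
    refine ⟨i + j, ?_⟩
    have : a ^ (i + j) * (x + y) = a ^ j * (a ^ i * x) + a ^ i * (a ^ j * y) := by ring
    exact this ▸ add_mem (mul_mem (pow_mem haB j) hi) (mul_mem (pow_mem haB i) hj)
  | neg x _ hx =>
    obtain ⟨i, hi⟩ := hx
    exact ⟨i, by simpa using neg_mem hi⟩
  | mul x y _ _ hx hy =>
    obtain ⟨i, hi⟩ := hx
    obtain ⟨j, hj⟩ := hy
    refine ⟨i + j, ?_⟩
    have : a ^ (i + j) * (x * y) = (a ^ i * x) * (a ^ j * y) := by ring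
    exact this ▸ mul_mem hi hj

theorem closure_union_eq_toSubring_adjoin (K : Subring L) (s : Set L) :
    Subring.closure (↑K ∪ s) = (Algebra.adjoin K s).toSubring := by
  rw [Algebra.adjoin_eq_ring_closure]
  congr
  ext x
  simpa using ⟨fun hx => ⟨x, hx, rfl⟩, fun ⟨y, hy, h⟩ => h ▸ hy⟩

theorem isNoetherianRing_closure_union_finset (K : Subring L) [IsNoetherianRing K] (t : Finset L) :
    IsNoetherianRing (Subring.closure (↑K ∪ (t : Set L))) := by
  rw [closure_union_eq_toSubring_adjoin]
  exact isNoetherianRing_of_fg (Subalgebra.fg_def.2 ⟨↑t, t.finite_toSet, rfl⟩)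

theorem unlocalizationStep_fg [IsNoetherianRing K] (ha : a ≠ 0) (hSR : S ≤ R) (haS : a ∈ S)
    {t : Finset L} (hS : S = Subring.closure (↑K ∪ ↑t)) :
    ∃ s : Finset L, unlocalizationStep K R a S = Subring.closure (↑K ∪ ↑s) := by
  classical
  have : IsNoetherianRing S := hS ▸ isNoetherianRing_closure_union_finset K t
  set M : Set L := {x | x ∈ R ∧ a * x ∈ S}
  have hfg : (Submodule.span S M).FG :=
    (Submodule.fg_span_singleton a⁻¹).of_le <| Submodule.span_le.2 fun x hx =>
      Submodule.mem_span_singleton.2 ⟨⟨a * x, hx.2⟩, by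
        simp only [Subring.smul_def, smul_eq_mul]; field_simp⟩
  obtain ⟨u, huM, hspan⟩ := (Submodule.fg_span_iff_fg_span_finset_subset M).1 hfg
  refine ⟨t ∪ u, le_antisymm ?_ ?_⟩
  · have hSC : S ≤ Subring.closure (↑K ∪ ↑(t ∪ u)) :=
      hS ▸ Subring.closure_mono (Set.union_subset_union_right _ (by simp))
    refine Subring.closure_le.2 (Set.union_subset (fun x hx => Subring.subset_closure (Or.inl hx))
      fun x hx => ?_)
    obtain ⟨f, -, rfl⟩ :=
      Submodule.mem_span_finset.1 (hspan ▸ Submodule.subset_span hx : x ∈ Submodule.span S ↑u)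
    exact Subring.sum_mem _ fun y hy =>
      Subring.mul_mem _ (hSC (f y).2) (Subring.subset_closure (Or.inr (by simp [hy])))
  · refine Subring.closure_le.2 (Set.union_subset (fun _ hx => le_unlocalizationStep_left hx) ?_)
    rw [Finset.coe_union]
    refine Set.union_subset (fun x hx => le_unlocalizationStep hSR haS ?_) fun x hx =>
      mem_unlocalizationStep_of_mul_mem (huM hx).1 (huM hx).2
    exact hS ▸ Subring.subset_closure (Or.inr hx)

theorem coe_eq_iUnion_unlocalizationChain (ha : a ≠ 0) (hKA : K ≤ A) (hAR : A ≤ R)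
    (hsat : ∀ x ∈ R, a * x ∈ A → x ∈ A) (hBA : B ≤ A) (haB : a ∈ B)
    (hloc : Subring.closure (↑A ∪ {a⁻¹}) = Subring.closure (↑B ∪ {a⁻¹})) :
    (A : Set L) = ⋃ k, (unlocalizationChain K R a B k : Set L) := by
  refine subset_antisymm (fun x hx => ?_)
    (Set.iUnion_subset fun k => unlocalizationChain_le hKA hsat hBA k)
  have hx' : x ∈ Subring.closure (↑B ∪ {a⁻¹}) := hloc ▸ Subring.subset_closure (Or.inl hx)
  obtain ⟨k, hk⟩ := exists_pow_mul_mem_of_mem_closure_union_inv ha haB hx'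
  exact Set.mem_iUnion.2 ⟨k, mem_unlocalizationChain_of_pow_mul_mem hAR (hBA haB) k hx hk⟩

end Field

theorem statement6_general {L G : Type*} [Field L] [Group G] [MulSemiringAction G L]
    (K : Subring L)
    (R : Subring L)
    -- the invariant ring R^G and the localizations R^G_{a₀}, B_{a₀} inside L
    (RG : Subring L) (hRG : RG = R ⊓ (FixedPoints.subfield G L).toSubring)
    (B : Subring L) (hBK : ↑K ⊆ (B : Set L)) (hBRG : B ≤ RG)
    (hBfg : ∃ s : Finset L, B = Subring.closure (↑K ∪ ↑s))
    (a₀ : L) (ha₀B : a₀ ∈ B) (ha₀ : a₀ ≠ 0)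
    (hloc : Subring.closure (↑RG ∪ {a₀⁻¹}) = Subring.closure (↑B ∪ {a₀⁻¹}))
    -- the ascending chain B₀ ⊆ B₁ ⊆ ⋯
    (Bc : ℕ → Subring L)
    (hBc0 : Bc 0 = B)
    (hBcSucc : ∀ k : ℕ,
      Bc (k + 1) = Subring.closure (↑K ∪ {x : L | x ∈ R ∧ a₀ * x ∈ Bc k})) :
    ((RG : Set L) = ⋃ k : ℕ, ↑(Bc k)) ∧
    (IsNoetherianRing ↥K → ∀ k : ℕ, ∃ s : Finset L,
        Bc k = Subring.closure (↑K ∪ ↑s)) ∧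
    (∀ k : ℕ, Bc k = Bc (k + 1) → RG = Bc k) ∧
    ((∃ s : Finset L, RG = Subring.closure (↑K ∪ ↑s)) →
      ∃ k : ℕ, Bc k = Bc (k + 1)) := by
  obtain rfl : Bc = unlocalizationChain K R a₀ B := funext fun k => by
    induction k with
    | zero => exact hBc0
    | succ k ih => rw [hBcSucc, ih, unlocalizationChain_succ]; rfl
  have hKB : K ≤ B := fun _ hx => hBK hx
  have hRGR : RG ≤ R := hRG ▸ inf_le_left
  have hsat : ∀ x ∈ R, a₀ * x ∈ RG → x ∈ RG := by
    subst hRG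
    set F := FixedPoints.subfield G L
    exact fun x hx hax => ⟨hx, by simpa [ha₀] using F.mul_mem (F.inv_mem (hBRG ha₀B).2) hax.2⟩
  have hBR : B ≤ R := hBRG.trans hRGR
  have hle := unlocalizationChain_le (hKB.trans hBRG) hsat hBRG
  have hmono := unlocalizationChain_monotone (hKB.trans hBR) hBR ha₀B
  have hunion := coe_eq_iUnion_unlocalizationChain ha₀ (hKB.trans hBRG) hRGR hsat hBRG ha₀B hloc
  refine ⟨hunion, fun _ k => ?_, fun k hk => eq_unlocalizationChain_of_eq_succ hmono hunion hk,
    fun ⟨s, hs⟩ => exists_unlocalizationChain_eq_succ hKB hmono hunion hs⟩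
  induction k with
  | zero => exact hBfg
  | succ k ih =>
    obtain ⟨t, ht⟩ := ih
    rw [unlocalizationChain_succ]
    exact unlocalizationStep_fg ha₀ ((hle k).trans hRGR)
      (mem_unlocalizationChain (hBR ha₀B) ha₀B k) ht

/-- **Invariant ring via unlocalization.**  Under the Assumption,
let `B ⊆ R^G` be a finitely generated `K`-subalgebra with `R^G_{a₀} = B_{a₀}`
for a nonzero `a₀ ∈ B`, and let `B₀ ⊆ B₁ ⊆ …` be the chain with `B₀ = B` and
`B_{k+1}` the (K-)subalgebra generated by `a₀⁻¹ B_k ∩ R`.  Then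
`R^G = ⋃ₖ B_k`; if `K` is Noetherian every `B_k` is a finitely generated
`K`-algebra; if `B_k = B_{k+1}` for some `k` then `R^G = B_k`; and if `R^G` is a
finitely generated `K`-algebra then such a `k` exists. -/
theorem statement6 {L G : Type*} [Field L] [Group G] [MulSemiringAction G L]
    {n : ℕ} (K : Subring L) (a : Fin n → L)
    (hK : ∀ (σ : G), ∀ x ∈ K, σ • x = x)
    (R : Subring L) (hR : R = Subring.closure (↑K ∪ Set.range a))
    (hRstable : ∀ (σ : G), ∀ x ∈ R, σ • x ∈ R)
    (hQuot : ∀ x : L, ∃ r ∈ R, ∃ s ∈ R, s ≠ 0 ∧ x = r / s)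
    (E : Ideal (MvPolynomial (Fin n) L))
    (hEproper : E ≠ ⊤)
    (hDE : derksenIdeal G a ≤ E)
    (hEstable : ∀ (σ : G), ∀ f ∈ E, polyAct G σ f ∈ E)
    (m : MonomialOrder (Fin n)) (Gb : Finset (MvPolynomial (Fin n) L))
    (hGb : IsReducedGroebnerBasis m E Gb)
    -- the invariant ring R^G and the localizations R^G_{a₀}, B_{a₀} inside L
    (RG : Subring L) (hRG : RG = R ⊓ (FixedPoints.subfield G L).toSubring)
    (B : Subring L) (hBK : ↑K ⊆ (B : Set L)) (hBRG : B ≤ RG)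
    (hBfg : ∃ s : Finset L, B = Subring.closure (↑K ∪ ↑s))
    (a₀ : L) (ha₀B : a₀ ∈ B) (ha₀ : a₀ ≠ 0)
    (hloc : Subring.closure (↑RG ∪ {a₀⁻¹}) = Subring.closure (↑B ∪ {a₀⁻¹}))
    -- the ascending chain B₀ ⊆ B₁ ⊆ ⋯
    (Bc : ℕ → Subring L)
    (hBc0 : Bc 0 = B)
    (hBcSucc : ∀ k : ℕ,
      Bc (k + 1) = Subring.closure (↑K ∪ {x : L | x ∈ R ∧ a₀ * x ∈ Bc k})) :
    ((RG : Set L) = ⋃ k : ℕ, ↑(Bc k)) ∧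
    (IsNoetherianRing ↥K → ∀ k : ℕ, ∃ s : Finset L,
        Bc k = Subring.closure (↑K ∪ ↑s)) ∧
    (∀ k : ℕ, Bc k = Bc (k + 1) → RG = Bc k) ∧
    ((∃ s : Finset L, RG = Subring.closure (↑K ∪ ↑s)) →
      ∃ k : ℕ, Bc k = Bc (k + 1)) :=
  statement6_general K R RG hRG B hBK hBRG hBfg a₀ ha₀B ha₀ hloc Bc hBc0 hBcSucc

end Derksen
end
end

section
/- Let I ⊆ K[x_1,…,x_n] be an ideal in a polynomial ring over a ring K, and let f_1,…,f_m, h_1,…,h_r ∈ K[x_1,…,x_n] with h_1 = 1, defining φ : K[y_1,…,y_m]^r → K[x_1,…,x_n]/I =: R by (g_1,…,g_r) ↦ Σ_j g_j(f_1,…,f_m)·h_j + I. Let J ⊆ K[x_1,…,x_n,y_1,…,y_m,z_2,…,z_r] be the ideal generated by I, all y_i − f_i, and all z_j − h_j. Choose a monomial ordering in which every x_i is bigger than every monomial in the y- and z-variables and such that for monomials s, t in the y- and z-variables, deg_z(s) < deg_z(t) implies s < t, and let 𝒢 be a Gröbner basis of J. Set 𝒢' := (K[y,z]_{≤1} ∩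 𝒢) ∪ {z_j·g : g ∈ K[y] ∩ 𝒢, j = 2,…,r}, where K[y,z]_{≤1} denotes polynomials of z-degree at most 1, and for g = g_1 + g_2 z_2 + … + g_r z_r with g_i ∈ K[y] write g⃗ := (g_1,…,g_r). Then ker(φ) is generated as a K[y_1,…,y_m]-module by {g⃗ : g ∈ 𝒢'}. Moreover, if z_r > z_j·t for all j < r and all monomials t in the y-variables, and if some vector of ker(φ) has last component 1, then such a vector arises as a K-linear combination of the g⃗ with g ∈ 𝒢'. -/
/-!
Under `g⃗ ↦ g = g_1 + g_2 z_2 + ⋯ + g_r z_r` (`assemble`), the kernel of `φ` corresponds to the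
elements of `J` that are `K[y]`-linear in the `z`-variables, because the substitution
`x ↦ x, y ↦ f, z ↦ h` identifies `K[x,y,z]/J` with `K[x]/I`. Such a `q ∈ J` is reduced by the
Gröbner basis: its leading coefficient is a combination of the leading coefficients of those
`g ∈ 𝒢` with `lm g ∣ lm q`, and the conditions on the order force each `(lm q / lm g) · g` to be a
`y`-monomial times an element of `𝒢'`. Subtracting lowers the leading monomial, and induction
finishes. In the second part `lm q = z_r`, so the reduction involves no `y`-monomials and already
yields a `K`-linear combination with last component `1`.
-/

open MvPolynomial
open scoped MonomialOrder
noncomputable section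

namespace KernelLemma

variable {K : Type*} [CommRing K]

/-- The leading monomial of a multivariate polynomial with respect to a
monomial order (it is `0` for the zero polynomial). -/
def lm {σ : Type*} (mo : MonomialOrder σ) {S : Type*} [CommSemiring S]
    (f : MvPolynomial σ S) : σ →₀ ℕ :=
  mo.toSyn.symm (f.support.sup fun d => mo.toSyn d)

/-- The leading term of a polynomial with respect to a monomial order. -/
def lt {σ : Type*} (mo : MonomialOrder σ) {S : Type*} [CommSemiring S]
    (f : MvPolynomial σ S) : MvPolynomial σ S :=
  monomial (lm mo f) (f.coeff (lm mo f))

/-- A Gröbner basis of an ideal of a polynomial ring over a (commutative) ring: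
a finite subset of the ideal which generates it and such that the leading term
of every nonzero element of the ideal lies in the ideal generated by the leading
terms of the basis elements. -/
def IsGroebnerBasisOverRing {σ : Type*} (mo : MonomialOrder σ)
    (J : Ideal (MvPolynomial σ K)) (B : Finset (MvPolynomial σ K)) : Prop :=
  (B : Set (MvPolynomial σ K)) ⊆ J ∧
  Ideal.span (B : Set (MvPolynomial σ K)) = J ∧
  ∀ p ∈ J, p ≠ 0 → lt mo p ∈ Ideal.span ((lt mo) '' (B : Set (MvPolynomial σ K)))

variable {n mm r : ℕ}

/-- The variables `x_1,…,x_n, y_1,…,y_m, z_2,…,z_r` (the `z`-variables are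
indexed by the nonzero indices). -/
abbrev Vars (n mm r : ℕ) := Fin n ⊕ (Fin mm ⊕ {j : Fin (r + 1) // j ≠ 0})

/-- a `z`-variable -/
abbrev zv (j : {j : Fin (r + 1) // j ≠ 0}) : Vars n mm r := Sum.inr (Sum.inr j)

/-- a `y`-variable -/
abbrev yv (i : Fin mm) : Vars n mm r := Sum.inr (Sum.inl i)

/-- a monomial involving no `x`-variable -/
def OnYZ (d : Vars n mm r →₀ ℕ) : Prop := ∀ i : Fin n, d (Sum.inl i) = 0

/-- the total degree of a monomial in the `z`-variables -/
def degz (d : Vars n mm r →₀ ℕ) : ℕ := ∑ j : {j : Fin (r + 1) // j ≠ 0}, d (zv j)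

/-- embedding `K[x] → K[x,y,z]` -/
def ιx : MvPolynomial (Fin n) K →+* MvPolynomial (Vars n mm r) K :=
  (rename (Sum.inl : Fin n → Vars n mm r)).toRingHom

/-- embedding `K[y] → K[x,y,z]` -/
def ιy : MvPolynomial (Fin mm) K →+* MvPolynomial (Vars n mm r) K :=
  (rename (yv : Fin mm → Vars n mm r)).toRingHom

/-- `(g_1,…,g_r) = g⃗ ↦ g = g_1 + g_2 z_2 + ⋯ + g_r z_r` -/
def assemble (v : Fin (r + 1) → MvPolynomial (Fin mm) K) :
    MvPolynomial (Vars n mm r) K :=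
  ιy (v 0) + ∑ j : {j : Fin (r + 1) // j ≠ 0}, X (zv j) * ιy (v j.1)

section ShiftedCombination

variable {σ R : Type*} [CommSemiring R] (m : MonomialOrder σ)

theorem exists_leadingCoeff_eq_sum_of_leadingTerm_mem_span {B : Finset (MvPolynomial σ R)}
    {p : MvPolynomial σ R} (hp : m.leadingTerm p ∈ Ideal.span (m.leadingTerm '' ↑B)) :
    ∃ c : MvPolynomial σ R → R,
      m.leadingCoeff p = ∑ g ∈ B with m.degree g ≤ m.degree p, c g * m.leadingCoeff g := by
  classical
  rw [Ideal.span, Submodule.mem_span_image_finset_iff_exists_fun'] at hp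
  obtain ⟨a, ha⟩ := hp
  refine ⟨fun g => coeff (m.degree p - m.degree g) (a g), ?_⟩
  have h := congrArg (coeff (m.degree p)) ha
  simp only [coeff_sum, smul_eq_mul, MonomialOrder.leadingTerm, coeff_mul_monomial'] at h
  rw [Finset.sum_filter, h, coeff_monomial, if_pos rfl]

def shiftedCombination (B : Finset (MvPolynomial σ R)) (c : MvPolynomial σ R → R)
    (d : σ →₀ ℕ) : MvPolynomial σ R :=
  ∑ g ∈ B with m.degree g ≤ d, c g • (monomial (d - m.degree g) 1 * g)

variable {m} {B : Finset (MvPolynomial σ R)} {c : MvPolynomial σ R → R} {d : σ →₀ ℕ}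

theorem coeff_shiftedCombination :
    coeff d (shiftedCombination m B c d) =
      ∑ g ∈ B with m.degree g ≤ d, c g * m.leadingCoeff g := by
  rw [shiftedCombination, coeff_sum]
  refine Finset.sum_congr rfl fun g hg => ?_
  rw [coeff_smul, coeff_monomial_mul', if_pos tsub_le_self,
    tsub_tsub_cancel_of_le (Finset.mem_filter.mp hg).2, one_mul, smul_eq_mul]
  rfl

theorem degree_shiftedCombination_le : m.degree (shiftedCombination m B c d) ≼[m] d := by
  refine m.degree_sum_le.trans (Finset.sup_le fun g hg => ?_)
  calc m.toSyn (m.degree (c g • (monomial (d - m.degree g) 1 * g)))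
      ≤ m.toSyn (m.degree (monomial (d - m.degree g) (1 : R))) + m.toSyn (m.degree g) :=
        m.degree_smul_le.trans (m.degree_mul_le.trans_eq (map_add _ _ _))
    _ ≤ m.toSyn (d - m.degree g) + m.toSyn (m.degree g) := by
        gcongr; exact m.degree_monomial_le 1
    _ = m.toSyn d := by rw [← map_add, tsub_add_cancel_of_le (Finset.mem_filter.mp hg).2]

end ShiftedCombination

theorem degree_sub_lt_of_coeff_eq {σ : Type*} {m : MonomialOrder σ} {f g : MvPolynomial σ K}
    (hg : m.degree g ≼[m] m.degree f) (hcoeff : g.coeff (m.degree f) = m.leadingCoeff f)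
    (hfg : f - g ≠ 0) : m.degree (f - g) ≺[m] m.degree f := by
  refine lt_of_le_of_ne (m.degree_sub_le.trans (sup_le le_rfl hg)) fun h => ?_
  apply m.coeff_degree_ne_zero_iff.mpr hfg
  rw [m.toSyn.injective h, coeff_sub, hcoeff, MonomialOrder.leadingCoeff, sub_self]

theorem mem_span_rename_inl_union_iff {σ τ : Type*} (I : Ideal (MvPolynomial σ K))
    (f : τ → MvPolynomial σ K) (p : MvPolynomial (σ ⊕ τ) K) :
    p ∈ Ideal.span (rename Sum.inl '' (I : Set (MvPolynomial σ K)) ∪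
        Set.range fun i => X (Sum.inr i) - rename Sum.inl (f i)) ↔
      aeval (Sum.elim X f) p ∈ I := by
  set ψ : MvPolynomial (σ ⊕ τ) K →ₐ[K] MvPolynomial σ K := aeval (Sum.elim X f)
  have hψ : ∀ q, ψ (rename Sum.inl q) = q := fun q => by
    rw [aeval_rename, Sum.elim_comp_inl, aeval_X_left_apply]
  set J := Ideal.span (rename Sum.inl '' (I : Set (MvPolynomial σ K)) ∪
        Set.range fun i => X (Sum.inr i) - rename Sum.inl (f i))
  constructor
  · intro hp
    refine (Ideal.span_le (I := I.comap ψ).mpr ?_) hp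
    rintro q (⟨q, hq, rfl⟩ | ⟨i, rfl⟩)
    · simpa [hψ] using hq
    · simp only [SetLike.mem_coe, Ideal.mem_comap, map_sub, hψ, ψ, aeval_X, Sum.elim_inr,
        sub_self, zero_mem]
  · intro hp
    -- modulo the generators `X (inr i) - f i`, every polynomial agrees with its image under `ψ`
    have hmod : (Ideal.Quotient.mkₐ K J).comp ((rename Sum.inl).comp ψ) =
        Ideal.Quotient.mkₐ K J := by
      refine MvPolynomial.algHom_ext fun v => ?_
      rcases v with i | i
      · simp [ψ]
      · simp only [AlgHom.comp_apply, ψ, aeval_X, Sum.elim_inr, Ideal.Quotient.mkₐ_eq_mk]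
        rw [eq_comm, Ideal.Quotient.eq]
        exact Ideal.subset_span (Or.inr ⟨i, rfl⟩)
    have h1 : p - rename Sum.inl (ψ p) ∈ J :=
      Ideal.Quotient.eq.mp (AlgHom.congr_fun hmod p).symm
    have h2 : rename Sum.inl (ψ p) ∈ J := Ideal.subset_span (Or.inl ⟨ψ p, hp, rfl⟩)
    simpa using J.add_mem h1 h2

section Monomials

theorem yv_injective : Function.Injective (yv : Fin mm → Vars n mm r) := fun _ _ h => by
  simpa using h

theorem OnYZ.mono {d e : Vars n mm r →₀ ℕ} (hd : OnYZ d) (hed : e ≤ d) : OnYZ e :=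
  fun i => Nat.eq_zero_of_le_zero (hd i ▸ hed _)

theorem OnYZ.add {d e : Vars n mm r →₀ ℕ} (hd : OnYZ d) (he : OnYZ e) : OnYZ (d + e) :=
  fun i => by simp [hd i, he i]

theorem degz_add (d e : Vars n mm r →₀ ℕ) : degz (d + e) = degz d + degz e := by
  simp [degz, Finset.sum_add_distrib]

/-- The exponent of `z_j y^t`, with `z_0 = 1` as in `assemble`. -/
def zyMonomial (j : Fin (r + 1)) (t : Fin mm →₀ ℕ) : Vars n mm r →₀ ℕ :=
  (if h : j = 0 then 0 else Finsupp.single (zv ⟨j, h⟩) 1) + t.mapDomain yv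

variable {j : Fin (r + 1)} {t : Fin mm →₀ ℕ}

@[simp]
theorem zyMonomial_apply_inl (i : Fin n) : zyMonomial (n := n) j t (Sum.inl i) = 0 := by
  rw [zyMonomial, Finsupp.add_apply, Finsupp.mapDomain_of_notMem_range _ _ (by simp)]
  split_ifs <;> simp

@[simp]
theorem zyMonomial_apply_yv (i : Fin mm) : zyMonomial (n := n) j t (yv i) = t i := by
  rw [zyMonomial, Finsupp.add_apply, Finsupp.mapDomain_apply yv_injective]
  split_ifs <;> simp

@[simp]
theorem zyMonomial_apply_zv (k : {j : Fin (r + 1) // j ≠ 0}) :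
    zyMonomial (n := n) (mm := mm) j t (zv k) = if k.1 = j then 1 else 0 := by
  rw [zyMonomial, Finsupp.add_apply, Finsupp.mapDomain_of_notMem_range _ _ (by simp)]
  by_cases h : j = 0
  · simp [h, k.2]
  · simp [h, Finsupp.single_apply, Subtype.ext_iff, eq_comm]

theorem onYZ_zyMonomial : OnYZ (zyMonomial (n := n) j t) := fun i => zyMonomial_apply_inl i

theorem degz_zyMonomial : degz (zyMonomial (n := n) j t) = if j = 0 then 0 else 1 := by
  simp only [degz, zyMonomial_apply_zv]
  split_ifs with hj
  · exact Finset.sum_eq_zero fun k _ => if_neg (hj ▸ k.2)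
  · rw [Finset.sum_eq_single ⟨j, hj⟩ (fun k _ hk => if_neg fun h => hk (Subtype.ext h))
      (by simp), if_pos rfl]

theorem zyMonomial_injective (j : Fin (r + 1)) :
    Function.Injective (zyMonomial (n := n) (mm := mm) j) := fun t t' h => by
  ext i
  simpa using congrArg (· (yv i)) h

theorem zyMonomial_eq_add (j : Fin (r + 1)) (t : Fin mm →₀ ℕ) :
    zyMonomial (n := n) j t = zyMonomial j 0 + t.mapDomain yv := by
  simp [zyMonomial]

theorem zyMonomial_zero_left (t : Fin mm →₀ ℕ) :
    zyMonomial (n := n) (r := r) 0 t = t.mapDomain yv := by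
  simp [zyMonomial]

theorem zyMonomial_zero_right (hj : j ≠ 0) :
    zyMonomial (n := n) (mm := mm) j 0 = Finsupp.single (zv ⟨j, hj⟩) 1 := by
  simp [zyMonomial, hj]

theorem exists_eq_zyMonomial {d : Vars n mm r →₀ ℕ} (hd : OnYZ d) (hd₁ : degz d ≤ 1) :
    ∃ j t, d = zyMonomial j t := by
  obtain ⟨j, hj⟩ : ∃ j : Fin (r + 1), ∀ k, d (zv k) = if k.1 = j then 1 else 0 := by
    by_cases hz : ∃ k, d (zv k) ≠ 0
    · obtain ⟨k₀, hk₀⟩ := hz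
      refine ⟨k₀.1, fun k => ?_⟩
      have hle : ∀ k, d (zv k) ≤ degz d := fun k =>
        Finset.single_le_sum (f := fun k => d (zv k)) (fun _ _ => Nat.zero_le _) (Finset.mem_univ k)
      split_ifs with hk
      · rw [Subtype.ext hk]
        have := hle k₀
        omega
      · have := Finset.add_le_sum (f := fun k => d (zv k)) (fun _ _ => Nat.zero_le _)
          (Finset.mem_univ k₀) (Finset.mem_univ k) fun h => hk (congrArg Subtype.val h).symm
        simp only [degz] at hd₁
        omega
    · simp only [not_exists, not_not] at hz
      exact ⟨0, fun k => by rw [hz k, if_neg k.2]⟩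
  refine ⟨j, d.comapDomain yv yv_injective.injOn, ?_⟩
  ext (i | i | k)
  · simp [hd i]
  · simp
  · simp [hj]

end Monomials

section Assemble

variable {j : Fin (r + 1)} {t : Fin mm →₀ ℕ}

theorem ιy_apply (p : MvPolynomial (Fin mm) K) : ιy (n := n) (r := r) p = rename yv p := rfl

theorem coeff_zyMonomial_ιy (p : MvPolynomial (Fin mm) K) :
    coeff (zyMonomial j t) (ιy (n := n) p) = if j = 0 then coeff t p else 0 := by
  rw [ιy_apply]
  split_ifs with hj
  · rw [hj, zyMonomial, dif_pos rfl, zero_add, coeff_rename_mapDomain _ yv_injective]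
  · refine coeff_rename_eq_zero _ _ _ fun u hu => absurd (congrArg (· (zv ⟨j, hj⟩)) hu) ?_
    rw [Finsupp.mapDomain_of_notMem_range _ _ (by simp)]
    simp

theorem coeff_zyMonomial_X_mul_ιy (k : {j : Fin (r + 1) // j ≠ 0})
    (p : MvPolynomial (Fin mm) K) :
    coeff (zyMonomial j t) (X (zv k) * ιy (n := n) p) = if k.1 = j then coeff t p else 0 := by
  rw [coeff_X_mul']
  simp only [Finsupp.mem_support_iff, zyMonomial_apply_zv, ne_eq, ite_eq_right_iff,
    one_ne_zero, imp_false, not_not]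
  split_ifs with hk
  · subst hk
    rw [zyMonomial, dif_neg k.2, add_tsub_cancel_left, ιy_apply,
      coeff_rename_mapDomain _ yv_injective]
  · rfl

theorem coeff_zyMonomial_assemble (v : Fin (r + 1) → MvPolynomial (Fin mm) K) :
    coeff (zyMonomial j t) (assemble (n := n) v) = coeff t (v j) := by
  simp only [assemble, coeff_add, coeff_sum, coeff_zyMonomial_ιy, coeff_zyMonomial_X_mul_ιy]
  by_cases hj : j = 0
  · subst hj
    rw [if_pos rfl, Finset.sum_eq_zero fun k _ => if_neg k.2, add_zero]
  · rw [if_neg hj, zero_add, Finset.sum_eq_single ⟨j, hj⟩ (fun k _ hk => if_neg fun h =>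
      hk (Subtype.ext h)) (by simp), if_pos rfl]

theorem exists_eq_zyMonomial_of_mem_support_assemble {v : Fin (r + 1) → MvPolynomial (Fin mm) K}
    {d : Vars n mm r →₀ ℕ} (hd : d ∈ (assemble (n := n) v).support) :
    ∃ j t, d = zyMonomial j t := by
  rcases Finset.mem_union.mp (support_add hd) with hd | hd
  · rw [ιy_apply, support_rename_of_injective yv_injective] at hd
    obtain ⟨t, -, rfl⟩ := Finset.mem_image.mp hd
    exact ⟨0, t, by simp [zyMonomial]⟩
  · obtain ⟨k, -, hd⟩ := Finset.mem_biUnion.mp (support_sum hd)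
    rw [support_X_mul, ιy_apply, support_rename_of_injective yv_injective] at hd
    obtain ⟨e, he, rfl⟩ := Finset.mem_map.mp hd
    obtain ⟨t, -, rfl⟩ := Finset.mem_image.mp he
    exact ⟨k.1, t, by simp [zyMonomial, k.2]⟩

theorem assemble_injective :
    Function.Injective (assemble (K := K) (n := n) (mm := mm) (r := r)) := fun v w h => by
  funext j
  ext t
  rw [← coeff_zyMonomial_assemble (n := n), h, coeff_zyMonomial_assemble]

theorem exists_assemble_eq {q : MvPolynomial (Vars n mm r) K}
    (hq : ∀ d ∈ q.support, OnYZ d ∧ degz d ≤ 1) : ∃ v, assemble (n := n) v = q := by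
  refine ⟨fun j => AddMonoidAlgebra.ofCoeff <| Finsupp.comapDomain (zyMonomial j)
    (AddMonoidAlgebra.coeff q) (zyMonomial_injective j).injOn, ?_⟩
  ext d
  by_cases hd : ∃ j t, d = zyMonomial j t
  · obtain ⟨j, t, rfl⟩ := hd
    rw [coeff_zyMonomial_assemble]
    rfl
  · rw [notMem_support_iff.mp fun h => hd (exists_eq_zyMonomial_of_mem_support_assemble h),
      notMem_support_iff.mp fun h => hd (exists_eq_zyMonomial (hq d h).1 (hq d h).2)]

theorem onYZ_and_degz_le_one_of_mem_support_X_mul {g : MvPolynomial (Vars n mm r) K}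
    (hg : ∀ e ∈ g.support, OnYZ e ∧ degz e = 0) (k : {j : Fin (r + 1) // j ≠ 0})
    {e : Vars n mm r →₀ ℕ} (he : e ∈ (X (zv k) * g).support) : OnYZ e ∧ degz e ≤ 1 := by
  rw [support_X_mul, Finset.mem_map] at he
  obtain ⟨e, he, rfl⟩ := he
  rw [addLeftEmbedding_apply, ← zyMonomial_zero_right k.2]
  refine ⟨onYZ_zyMonomial.add (hg e he).1, ?_⟩
  rw [degz_add, degz_zyMonomial, if_neg k.2, (hg e he).2]

theorem assemble_add (v w : Fin (r + 1) → MvPolynomial (Fin mm) K) :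
    assemble (n := n) (v + w) = assemble v + assemble w := by
  simp only [assemble, Pi.add_apply, map_add, mul_add, Finset.sum_add_distrib]
  ring

theorem assemble_smul (p : MvPolynomial (Fin mm) K) (v : Fin (r + 1) → MvPolynomial (Fin mm) K) :
    assemble (n := n) (p • v) = ιy p * assemble v := by
  simp only [assemble, Pi.smul_apply, smul_eq_mul, map_mul, mul_add, Finset.mul_sum]
  ring_nf

def assembleₗ :
    (Fin (r + 1) → MvPolynomial (Fin mm) K) →ₗ[K] MvPolynomial (Vars n mm r) K where
  toFun := assemble
  map_add' := assemble_add
  map_smul' c v := by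
    rw [← algebraMap_smul (MvPolynomial (Fin mm) K) c v, assemble_smul, ιy_apply,
      AlgHom.commutes, ← Algebra.smul_def, RingHom.id_apply]

theorem assemble_zero : assemble (n := n) (0 : Fin (r + 1) → MvPolynomial (Fin mm) K) = 0 :=
  map_zero assembleₗ

theorem assembleₗ_apply (v : Fin (r + 1) → MvPolynomial (Fin mm) K) :
    assembleₗ (n := n) v = assemble v := rfl

end Assemble

theorem assemble_mem_span_iff (I : Ideal (MvPolynomial (Fin n) K))
    (fp : Fin mm → MvPolynomial (Fin n) K) (hp : Fin (r + 1) → MvPolynomial (Fin n) K)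
    (hp0 : hp 0 = 1) (v : Fin (r + 1) → MvPolynomial (Fin mm) K) :
    assemble (n := n) v ∈ Ideal.span (((ιx : MvPolynomial (Fin n) K →+*
          MvPolynomial (Vars n mm r) K) '' I) ∪
        Set.range (fun i : Fin mm => X (yv i) - ιx (fp i)) ∪
        Set.range (fun j : {j : Fin (r + 1) // j ≠ 0} => X (zv j) - ιx (hp j.1))) ↔
      ∑ j, eval₂ C fp (v j) * hp j ∈ I := by
  set f : Fin mm ⊕ {j : Fin (r + 1) // j ≠ 0} → MvPolynomial (Fin n) K :=
    Sum.elim fp fun j => hp j.1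
  have hgens : ((ιx : MvPolynomial (Fin n) K →+* MvPolynomial (Vars n mm r) K) '' I) ∪
        Set.range (fun i : Fin mm => X (yv i) - ιx (fp i)) ∪
        Set.range (fun j : {j : Fin (r + 1) // j ≠ 0} => X (zv j) - ιx (hp j.1)) =
      rename Sum.inl '' (I : Set (MvPolynomial (Fin n) K)) ∪
        Set.range fun i => X (Sum.inr i) - rename Sum.inl (f i) := by
    rw [Set.union_assoc, ← Set.Sum.elim_range]
    congr 2
    funext i
    rcases i with i | j <;> rfl
  have hιy : ∀ p, aeval (Sum.elim X f) (ιy (n := n) p) = eval₂ C fp p := fun p => by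
    rw [ιy_apply, aeval_rename, aeval_def, algebraMap_eq]
    rfl
  rw [hgens, mem_span_rename_inl_union_iff, assemble, map_add, map_sum, hιy,
    Fintype.sum_eq_add_sum_subtype_ne _ (0 : Fin (r + 1)), hp0, mul_one]
  simp only [map_mul, aeval_X, hιy, zv, f, Sum.elim_inr, mul_comm]

def IsEliminationOrder (mo : MonomialOrder (Vars n mm r)) : Prop :=
  (∀ (i : Fin n) (d : Vars n mm r →₀ ℕ), OnYZ d →
      d ≺[mo] Finsupp.single (Sum.inl i : Vars n mm r) 1) ∧
    ∀ d e : Vars n mm r →₀ ℕ, OnYZ d → OnYZ e → degz d < degz e → d ≺[mo] e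

/-- The set `𝒢'`. -/
def zLinearGenerators (B : Finset (MvPolynomial (Vars n mm r) K)) :
    Set (MvPolynomial (Vars n mm r) K) :=
  {g | g ∈ B ∧ (∀ d ∈ g.support, OnYZ d ∧ degz d ≤ 1)} ∪
    {p : MvPolynomial (Vars n mm r) K |
      ∃ g ∈ B, (∀ d ∈ g.support, OnYZ d ∧ degz d = 0) ∧
      ∃ j : {j : Fin (r + 1) // j ≠ 0}, p = X (zv j) * g}

section Reduction

variable {mo : MonomialOrder (Vars n mm r)} {B : Finset (MvPolynomial (Vars n mm r) K)}

theorem IsEliminationOrder.onYZ_and_degz_le (hmo : IsEliminationOrder mo)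
    {g : MvPolynomial (Vars n mm r) K} (hg : OnYZ (mo.degree g)) {d : Vars n mm r →₀ ℕ}
    (hd : d ∈ g.support) : OnYZ d ∧ degz d ≤ degz (mo.degree g) := by
  have hle := mo.le_degree hd
  have hdOn : OnYZ d := fun i => by
    by_contra hi
    have hxd : Finsupp.single (Sum.inl i : Vars n mm r) 1 ≤ d :=
      Finsupp.single_le_iff.mpr (Nat.one_le_iff_ne_zero.mpr hi)
    exact lt_irrefl _ ((hmo.1 i _ hg).trans_le ((mo.toSyn_monotone hxd).trans hle))
  exact ⟨hdOn, not_lt.mp fun h => (hmo.2 _ _ hg hdOn h).not_ge hle⟩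

theorem IsGroebnerBasisOverRing.exists_leadingCoeff_eq_sum
    {J : Ideal (MvPolynomial (Vars n mm r) K)} (hB : IsGroebnerBasisOverRing mo J B)
    {p : MvPolynomial (Vars n mm r) K} (hp : p ∈ J) (hp0 : p ≠ 0) :
    ∃ c : MvPolynomial (Vars n mm r) K → K,
      mo.leadingCoeff p = ∑ g ∈ B with mo.degree g ≤ mo.degree p, c g * mo.leadingCoeff g :=
  exists_leadingCoeff_eq_sum_of_leadingTerm_mem_span mo (hB.2.2 p hp hp0)

theorem assemble_mem_of_mem_span {J : Ideal (MvPolynomial (Vars n mm r) K)}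
    (hBJ : (B : Set (MvPolynomial (Vars n mm r) K)) ⊆ J)
    {v : Fin (r + 1) → MvPolynomial (Fin mm) K}
    (hv : v ∈ Submodule.span (MvPolynomial (Fin mm) K)
      {u | assemble (n := n) u ∈ zLinearGenerators B}) :
    assemble (n := n) v ∈ J := by
  induction hv using Submodule.span_induction with
  | mem u hu =>
    rcases hu with ⟨hg, -⟩ | ⟨g, hg, -, j, hu⟩
    · exact hBJ hg
    · exact hu ▸ J.mul_mem_left _ (hBJ hg)
  | zero => exact assemble_zero (K := K) (n := n) ▸ J.zero_mem
  | add u w _ _ hu hw => exact (assemble_add u w) ▸ J.add_mem hu hw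
  | smul p u _ hu => exact (assemble_smul p u) ▸ J.mul_mem_left _ hu

theorem exists_monomial_mul_eq_assemble (hmo : IsEliminationOrder mo)
    {g : MvPolynomial (Vars n mm r) K} (hg : g ∈ B) {d : Vars n mm r →₀ ℕ} (hd : OnYZ d)
    (hd₁ : degz d ≤ 1) (hgd : mo.degree g ≤ d) :
    ∃ (t : Fin mm →₀ ℕ) (u : Fin (r + 1) → MvPolynomial (Fin mm) K),
      assemble (n := n) u ∈ zLinearGenerators B ∧ t.mapDomain yv ≤ d - mo.degree g ∧
        monomial (d - mo.degree g) 1 * g = assemble (monomial t (1 : K) • u) := by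
  have hgOn : OnYZ (mo.degree g) := hd.mono hgd
  have hdeg : degz (d - mo.degree g) + degz (mo.degree g) = degz d := by
    rw [← degz_add, tsub_add_cancel_of_le hgd]
  have hsupp := fun e (he : e ∈ g.support) => hmo.onYZ_and_degz_le hgOn he
  obtain ⟨j, t, hδ⟩ := exists_eq_zyMonomial (hd.mono (tsub_le_self (b := mo.degree g)))
    (by omega)
  have hδ' := hδ.trans (zyMonomial_eq_add j t)
  have hmon : monomial (d - mo.degree g) (1 : K) =
      monomial (zyMonomial j 0) 1 * ιy (monomial t 1) := by
    rw [hδ', ιy_apply, rename_monomial, monomial_mul, one_mul]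
  have hty : t.mapDomain yv ≤ d - mo.degree g := hδ' ▸ le_add_self
  by_cases hj : j = 0
  · subst hj
    have hlin : ∀ e ∈ g.support, OnYZ e ∧ degz e ≤ 1 :=
      fun e he => ⟨(hsupp e he).1, (hsupp e he).2.trans (by omega)⟩
    obtain ⟨u, hu⟩ := exists_assemble_eq (n := n) hlin
    refine ⟨t, u, hu ▸ Or.inl ⟨hg, hlin⟩, hty, ?_⟩
    rw [hmon, assemble_smul, hu]
    simp [zyMonomial]
  · have hz : monomial (zyMonomial (n := n) (mm := mm) j 0) (1 : K) = X (zv ⟨j, hj⟩) := by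
      rw [zyMonomial_zero_right hj]
      rfl
    have hlin : ∀ e ∈ g.support, OnYZ e ∧ degz e = 0 := by
      rw [hδ, degz_zyMonomial, if_neg hj] at hdeg
      exact fun e he => ⟨(hsupp e he).1, by have := (hsupp e he).2; omega⟩
    obtain ⟨u, hu⟩ := exists_assemble_eq (n := n) fun e he =>
      onYZ_and_degz_le_one_of_mem_support_X_mul hlin ⟨j, hj⟩ he
    refine ⟨t, u, hu ▸ Or.inr ⟨g, hg, hlin, ⟨j, hj⟩, rfl⟩, hty, ?_⟩
    rw [hmon, assemble_smul, hu, hz]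
    ring

end Reduction

section Kernel

variable {mo : MonomialOrder (Vars n mm r)} {B : Finset (MvPolynomial (Vars n mm r) K)}
  {J : Ideal (MvPolynomial (Vars n mm r) K)}

theorem mem_span_of_assemble_mem (hmo : IsEliminationOrder mo) (hB : IsGroebnerBasisOverRing mo J B)
    {v : Fin (r + 1) → MvPolynomial (Fin mm) K} (hv : assemble (n := n) v ∈ J) :
    v ∈ Submodule.span (MvPolynomial (Fin mm) K)
      {u | assemble (n := n) u ∈ zLinearGenerators B} := by
  set V := Submodule.span (MvPolynomial (Fin mm) K)
    {u | assemble (n := n) u ∈ zLinearGenerators B}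
  induction v using (InvImage.wf (fun v => mo.toSyn (mo.degree (assemble (n := n) v)))
    wellFounded_lt).induction with
  | _ v ih =>
    set q := assemble (n := n) v
    by_cases hq : q = 0
    · rw [assemble_injective (hq.trans assemble_zero.symm)]
      exact V.zero_mem
    obtain ⟨j, t, hdeg⟩ := exists_eq_zyMonomial_of_mem_support_assemble (mo.degree_mem_support hq)
    obtain ⟨c, hc⟩ := hB.exists_leadingCoeff_eq_sum hv hq
    set Q := shiftedCombination mo B c (mo.degree q)
    obtain ⟨w, hwV, hw⟩ : Q ∈ (V.restrictScalars K).map assembleₗ := by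
      refine Submodule.sum_mem _ fun g hg => ?_
      obtain ⟨t', u, hu, -, heq⟩ :=
        exists_monomial_mul_eq_assemble hmo (Finset.mem_filter.mp hg).1
        (by rw [hdeg]; exact onYZ_zyMonomial) (by rw [hdeg, degz_zyMonomial]; split_ifs <;> omega)
        (Finset.mem_filter.mp hg).2
      rw [heq]
      exact Submodule.smul_mem _ _
        (Submodule.mem_map_of_mem (V.smul_mem _ (Submodule.subset_span hu)))
    have hsub : assemble (n := n) (v - w) = q - Q := by
      rw [← hw]
      exact map_sub assembleₗ v w
    have hvw : assemble (n := n) (v - w) ∈ J :=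
      hsub ▸ J.sub_mem hv (hw ▸ assemble_mem_of_mem_span hB.1 hwV)
    by_cases h0 : assemble (n := n) (v - w) = 0
    · rw [sub_eq_zero.mp (assemble_injective (h0.trans assemble_zero.symm))]
      exact hwV
    have hlt : mo.degree (q - Q) ≺[mo] mo.degree q := degree_sub_lt_of_coeff_eq
      degree_shiftedCombination_le (coeff_shiftedCombination.trans hc.symm) (hsub ▸ h0)
    simpa using V.add_mem (ih (v - w) (by simpa only [InvImage, hsub] using hlt) hvw) hwV

theorem degree_assemble_eq_of_apply_eq_one [Nontrivial K]
    (hmo : ∀ d e : Vars n mm r →₀ ℕ, OnYZ d → OnYZ e → degz d < degz e → d ≺[mo] e)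
    (jr : {j : Fin (r + 1) // j ≠ 0})
    (hjr : ∀ j : {j : Fin (r + 1) // j ≠ 0}, j ≠ jr →
      ∀ t : Vars n mm r →₀ ℕ, OnYZ t → degz t = 0 →
        Finsupp.single (zv j) 1 + t ≺[mo] Finsupp.single (zv jr) 1)
    {v : Fin (r + 1) → MvPolynomial (Fin mm) K} (hv : v jr.1 = 1) :
    mo.degree (assemble (n := n) v) = zyMonomial jr.1 0 := by
  have hmem : zyMonomial jr.1 0 ∈ (assemble (n := n) v).support := by
    rw [mem_support_iff, coeff_zyMonomial_assemble, hv, coeff_zero_one]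
    exact one_ne_zero
  refine mo.toSyn.injective (le_antisymm (mo.degree_le_iff.mpr fun e he => ?_) (mo.le_degree hmem))
  obtain ⟨j, t, rfl⟩ := exists_eq_zyMonomial_of_mem_support_assemble he
  by_cases hj : j = 0
  · subst hj
    exact (hmo _ _ onYZ_zyMonomial onYZ_zyMonomial (by simp [degz_zyMonomial, jr.2])).le
  by_cases hjjr : j = jr.1
  · subst hjjr
    obtain rfl : t = 0 := by
      by_contra ht
      rw [mem_support_iff, coeff_zyMonomial_assemble, hv, coeff_one, if_neg (Ne.symm ht)] at he
      exact he rfl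
    exact le_rfl
  rw [zyMonomial_eq_add, zyMonomial_zero_right hj, zyMonomial_zero_right jr.2,
    ← zyMonomial_zero_left]
  exact (hjr ⟨j, hj⟩ (fun h => hjjr (congrArg Subtype.val h)) _ onYZ_zyMonomial
    (by rw [degz_zyMonomial, if_pos rfl])).le

theorem exists_mem_span_assemble_mem_and_apply_eq_one (hmo : IsEliminationOrder mo)
    (hB : IsGroebnerBasisOverRing mo J B) (jr : {j : Fin (r + 1) // j ≠ 0})
    (hjr : ∀ j : {j : Fin (r + 1) // j ≠ 0}, j ≠ jr →
      ∀ t : Vars n mm r →₀ ℕ, OnYZ t → degz t = 0 →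
        Finsupp.single (zv j) 1 + t ≺[mo] Finsupp.single (zv jr) 1)
    {v : Fin (r + 1) → MvPolynomial (Fin mm) K} (hvJ : assemble (n := n) v ∈ J)
    (hv : v jr.1 = 1) :
    ∃ w ∈ Submodule.span K {u | assemble (n := n) u ∈ zLinearGenerators B},
      assemble (n := n) w ∈ J ∧ w jr.1 = 1 := by
  rcases subsingleton_or_nontrivial K with hK | hK
  · exact ⟨0, zero_mem _, by rw [assemble_zero]; exact J.zero_mem, Subsingleton.elim _ _⟩
  set dz := zyMonomial (n := n) (mm := mm) jr.1 0
  have hdeg := degree_assemble_eq_of_apply_eq_one hmo.2 jr hjr hv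
  have hlc : mo.leadingCoeff (assemble (n := n) v) = 1 := by
    rw [MonomialOrder.leadingCoeff, hdeg, coeff_zyMonomial_assemble, hv, coeff_zero_one]
  obtain ⟨c, hc⟩ := hB.exists_leadingCoeff_eq_sum hvJ
    (mo.leadingCoeff_ne_zero_iff.mp (hlc ▸ one_ne_zero))
  rw [hdeg, hlc] at hc
  -- `dz` is a single variable, so no `y`-monomial factor occurs in the reduction step
  obtain ⟨w, hwS, hw⟩ : shiftedCombination mo B c dz ∈
      (Submodule.span K {u | assemble (n := n) u ∈ zLinearGenerators B}).map assembleₗ := by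
    refine Submodule.sum_mem _ fun g hg => ?_
    obtain ⟨t, u, hu, ht, heq⟩ :=
      exists_monomial_mul_eq_assemble hmo (Finset.mem_filter.mp hg).1
      onYZ_zyMonomial (by rw [degz_zyMonomial]; split_ifs <;> omega) (Finset.mem_filter.mp hg).2
    obtain rfl : t = 0 := by
      ext i
      simpa [dz, Finsupp.mapDomain_apply yv_injective] using (ht.trans tsub_le_self) (yv i)
    rw [heq, ← C_apply, C_1, one_smul]
    exact Submodule.smul_mem _ _ (Submodule.mem_map_of_mem (Submodule.subset_span hu))
  refine ⟨w, hwS,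
    assemble_mem_of_mem_span hB.1 (Submodule.span_le_restrictScalars K _ _ hwS), ?_⟩
  rw [assembleₗ_apply] at hw
  ext t
  rw [← coeff_zyMonomial_assemble (n := n), hw]
  by_cases ht : t = 0
  · rw [ht, coeff_shiftedCombination, ← hc, coeff_zero_one]
  rw [coeff_one, if_neg (Ne.symm ht)]
  refine mo.coeff_eq_zero_of_lt (degree_shiftedCombination_le.trans_lt (mo.toSyn_strictMono ?_))
  rw [zyMonomial_eq_add jr.1 t]
  refine lt_add_of_pos_right _ (pos_iff_ne_zero.mpr ?_)
  rw [← Finsupp.mapDomain_zero (f := yv)]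
  exact (Finsupp.mapDomain_injective yv_injective).ne ht

end Kernel

/-- **kernel of a presentation map.** -/
theorem statement8
    (I : Ideal (MvPolynomial (Fin n) K))
    (fp : Fin mm → MvPolynomial (Fin n) K)
    (hp : Fin (r + 1) → MvPolynomial (Fin n) K)
    (hp0 : hp 0 = 1)
    -- the map φ : K[y]^r → K[x]/I
    (φ : (Fin (r + 1) → MvPolynomial (Fin mm) K) → MvPolynomial (Fin n) K ⧸ I)
    (hφ : ∀ v, φ v = Ideal.Quotient.mk I (∑ j, eval₂ C fp (v j) * hp j))
    -- the ideal J generated by I, the y_i − f_i and the z_j − h_j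
    (J : Ideal (MvPolynomial (Vars n mm r) K))
    (hJ : J = Ideal.span (((ιx : MvPolynomial (Fin n) K →+*
          MvPolynomial (Vars n mm r) K) '' I) ∪
        Set.range (fun i : Fin mm => X (yv i) - ιx (fp i)) ∪
        Set.range (fun j : {j : Fin (r + 1) // j ≠ 0} => X (zv j) - ιx (hp j.1))))
    -- the monomial ordering
    (mo : MonomialOrder (Vars n mm r))
    (hmo₁ : ∀ (i : Fin n) (d : Vars n mm r →₀ ℕ), OnYZ d →
      d ≺[mo] Finsupp.single (Sum.inl i : Vars n mm r) 1)
    (hmo₂ : ∀ d e : Vars n mm r →₀ ℕ, OnYZ d → OnYZ e → degz d < degz e →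
      d ≺[mo] e)
    -- a Gröbner basis 𝒢 of J and the derived set 𝒢'
    (B : Finset (MvPolynomial (Vars n mm r) K))
    (hB : IsGroebnerBasisOverRing mo J B)
    (B' : Set (MvPolynomial (Vars n mm r) K))
    (hB' : B' = {g | g ∈ B ∧ (∀ d ∈ g.support, OnYZ d ∧ degz d ≤ 1)} ∪
      {p | ∃ g ∈ B, (∀ d ∈ g.support, OnYZ d ∧ degz d = 0) ∧
        ∃ j : {j : Fin (r + 1) // j ≠ 0}, p = X (zv j) * g}) :
    -- ker φ is generated as a K[y]-module by the vectors of elements of 𝒢'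
    {v : Fin (r + 1) → MvPolynomial (Fin mm) K | φ v = 0} =
      (Submodule.span (MvPolynomial (Fin mm) K)
        {v : Fin (r + 1) → MvPolynomial (Fin mm) K |
          assemble (n := n) v ∈ B'} : Set _) ∧
    -- and, under the extra ordering assumption, a kernel vector with last
    -- component 1 can be found among the K-linear combinations
    (∀ jr : {j : Fin (r + 1) // j ≠ 0},
      (∀ j : {j : Fin (r + 1) // j ≠ 0}, j ≠ jr →
        ∀ t : Vars n mm r →₀ ℕ, OnYZ t → degz t = 0 →
          Finsupp.single (zv j) 1 + t ≺[mo] Finsupp.single (zv jr) 1) →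
      (∃ v, φ v = 0 ∧ v jr.1 = 1) →
      ∃ v ∈ Submodule.span K
          {v : Fin (r + 1) → MvPolynomial (Fin mm) K | assemble (n := n) v ∈ B'},
        φ v = 0 ∧ v jr.1 = 1) := by
  have hker : ∀ v, φ v = 0 ↔ assemble (n := n) v ∈ J := fun v => by
    rw [hφ, Ideal.Quotient.eq_zero_iff_mem, hJ, assemble_mem_span_iff I fp hp hp0]
  have hmo : IsEliminationOrder mo := ⟨hmo₁, hmo₂⟩
  subst hB'
  refine ⟨?_, ?_⟩
  · ext v
    rw [Set.mem_ofPred_eq, SetLike.mem_coe, hker]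
    exact ⟨mem_span_of_assemble_mem hmo hB, assemble_mem_of_mem_span hB.1⟩
  · rintro jr hjr ⟨v, hv, hvjr⟩
    obtain ⟨w, hw, hwJ, hwjr⟩ :=
      exists_mem_span_assemble_mem_and_apply_eq_one hmo hB jr hjr ((hker v).mp hv) hvjr
    exact ⟨w, hw, (hker w).mpr hwJ, hwjr⟩

end KernelLemma
end
end

section
/- Let G be a linear algebraic group over an algebraically closed field K acting on an affine G-variety X with coordinate ring R = S = K[X] generated by a_1,…,a_n, so that φ : X → K^n, v ↦ (a_1(v),…,a_n(v)) is an injective closed morphism. Let f_1,…,f_s ∈ K[y_1,…,y_n] and let Z ⊆ X be the subvariety of points at which all f_i(a_1,…,a_n) vanish. If the set M := {x ∈ X : the orbit closure of x meets Z} is dense in X, then E := D_{a_1,…,a_n} + (f_1,…,f_s) is an extended Derksen ideal satisfying R ∩ E = {0}. -/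
open MvPolynomial
noncomputable section

namespace AlgGeo

variable {K : Type*} [Field K]

/-- The zero locus in affine `N`-space of a set of polynomials. -/
def zeroLocus {N : ℕ} (S : Set (MvPolynomial (Fin N) K)) : Set (Fin N → K) :=
  {x | ∀ f ∈ S, eval x f = 0}

/-- An (affine) algebraic set: the zero locus of a set of polynomials. -/
def IsAlgebraicSet {N : ℕ} (V : Set (Fin N → K)) : Prop :=
  ∃ S : Set (MvPolynomial (Fin N) K), V = zeroLocus S

/-- The vanishing ideal of a subset of affine `N`-space. -/
def vanishingIdeal {N : ℕ} (V : Set (Fin N → K)) :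
    Ideal (MvPolynomial (Fin N) K) where
  carrier := {f | ∀ x ∈ V, eval x f = 0}
  add_mem' := by
    intro a b ha hb x hx
    simp only [Set.mem_setOf_eq, map_add, ha x hx, hb x hx, add_zero]
  zero_mem' := by intro x _; simp
  smul_mem' := by
    intro c a ha x hx
    simp only [Set.mem_setOf_eq, smul_eq_mul, map_mul, ha x hx, mul_zero]

/-- The Zariski closure of a subset of affine `N`-space. -/
def zclosure {N : ℕ} (V : Set (Fin N → K)) : Set (Fin N → K) :=
  zeroLocus (vanishingIdeal V : Set (MvPolynomial (Fin N) K))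

/-- The Krull dimension of a subset of affine `N`-space (the Krull dimension of
its coordinate ring). -/
def dimOfSet {N : ℕ} (V : Set (Fin N → K)) : WithBot (WithTop ℕ) :=
  ringKrullDim (MvPolynomial (Fin N) K ⧸ vanishingIdeal V)

/-- The coordinate ring of `V`: the `K`-algebra of functions `V → K` that are
restrictions of polynomials. -/
def coordRing {N : ℕ} (V : Set (Fin N → K)) : Subalgebra K (↥V → K) where
  carrier := {f | ∃ p : MvPolynomial (Fin N) K, ∀ x : V, f x = eval (x : Fin N → K) p}
  mul_mem' := by
    rintro f g ⟨p, hp⟩ ⟨q, hq⟩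
    exact ⟨p * q, fun x => by simp [hp x, hq x]⟩
  one_mem' := ⟨1, fun x => by simp⟩
  add_mem' := by
    rintro f g ⟨p, hp⟩ ⟨q, hq⟩
    exact ⟨p + q, fun x => by simp [hp x, hq x]⟩
  zero_mem' := ⟨0, fun x => by simp⟩
  algebraMap_mem' := fun c => ⟨C c, fun x => by simp⟩

/-- Evaluation of a regular function at a point, as a ring homomorphism. -/
def evAt {N : ℕ} {V : Set (Fin N → K)} (x : ↥V) : ↥(coordRing V) →+* K :=
  (Pi.evalRingHom (fun _ : ↥V => K) x).comp (coordRing V).val.toRingHom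

/-- Evaluation of a regular function at a point, as a `K`-algebra homomorphism. -/
def evAtAlg {N : ℕ} {V : Set (Fin N → K)} (x : ↥V) : ↥(coordRing V) →ₐ[K] K :=
  (Pi.evalAlgHom K (fun _ : ↥V => K) x).comp (coordRing V).val

/-- A linear algebraic group over `K`, realized as an algebraic subset of affine
`m`-space whose group operations are given by polynomial maps. -/
structure AlgGroup (K : Type*) [Field K] where
  m : ℕ
  car : Set (Fin m → K)
  isAlg : IsAlgebraicSet car
  one : Fin m → K
  one_mem : one ∈ car
  mul : (Fin m → K) → (Fin m → K) → (Fin m → K)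
  inv : (Fin m → K) → (Fin m → K)
  mul_polynomial : ∀ i : Fin m, ∃ p : MvPolynomial (Fin m ⊕ Fin m) K,
    ∀ x ∈ car, ∀ y ∈ car, mul x y i = eval (Sum.elim x y) p
  inv_polynomial : ∀ i : Fin m, ∃ p : MvPolynomial (Fin m) K,
    ∀ x ∈ car, inv x i = eval x p
  mul_mem : ∀ {x y}, x ∈ car → y ∈ car → mul x y ∈ car
  inv_mem : ∀ {x}, x ∈ car → inv x ∈ car
  mul_assoc' : ∀ x ∈ car, ∀ y ∈ car, ∀ z ∈ car, mul (mul x y) z = mul x (mul y z)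
  one_mul' : ∀ x ∈ car, mul one x = x
  mul_one' : ∀ x ∈ car, mul x one = x
  inv_mul' : ∀ x ∈ car, mul (inv x) x = one

instance (G : AlgGroup K) : Monoid ↥G.car where
  mul a b := ⟨G.mul a b, G.mul_mem a.2 b.2⟩
  one := ⟨G.one, G.one_mem⟩
  mul_assoc a b c := Subtype.ext (G.mul_assoc' _ a.2 _ b.2 _ c.2)
  one_mul a := Subtype.ext (G.one_mul' _ a.2)
  mul_one a := Subtype.ext (G.mul_one' _ a.2)

/-- The inverse of a group element, as a point of the group. -/
def AlgGroup.invPt (G : AlgGroup K) (σ : ↥G.car) : ↥G.car := ⟨G.inv σ, G.inv_mem σ.2⟩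

/-- An affine `G`-variety: an algebraic subset of affine `n`-space with an
action of `G` given by polynomial maps. -/
structure GVariety (K : Type*) [Field K] (G : AlgGroup K) where
  n : ℕ
  car : Set (Fin n → K)
  isAlg : IsAlgebraicSet car
  act : (Fin G.m → K) → (Fin n → K) → (Fin n → K)
  act_polynomial : ∀ i : Fin n, ∃ p : MvPolynomial (Fin n ⊕ Fin G.m) K,
    ∀ σ ∈ G.car, ∀ x ∈ car, act σ x i = eval (Sum.elim x σ) p
  act_mem : ∀ {σ x}, σ ∈ G.car → x ∈ car → act σ x ∈ car
  act_one : ∀ x ∈ car, act G.one x = x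
  act_mul : ∀ σ ∈ G.car, ∀ τ ∈ G.car, ∀ x ∈ car,
    act (G.mul σ τ) x = act σ (act τ x)
  act_regular : ∀ σ ∈ G.car, ∀ p : MvPolynomial (Fin n) K,
    ∃ q : MvPolynomial (Fin n) K, ∀ x ∈ car, eval (act σ x) p = eval x q

namespace GVariety

variable {G : AlgGroup K} (X : GVariety K G)

/-- The action on points. -/
def actPt (σ : ↥G.car) (x : ↥X.car) : ↥X.car := ⟨X.act σ x, X.act_mem σ.2 x.2⟩

/-- The action of `σ ∈ G` on functions on `X`: `(σ·f)(x) = f(σ⁻¹·x)`. -/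
def gactFun (σ : ↥G.car) (f : ↥X.car → K) : ↥X.car → K :=
  fun x => f (X.actPt (G.invPt σ) x)

theorem gactFun_mem (σ : ↥G.car) {f : ↥X.car → K} (hf : f ∈ coordRing X.car) :
    X.gactFun σ f ∈ coordRing X.car := by
  obtain ⟨p, hp⟩ := hf
  obtain ⟨q, hq⟩ := X.act_regular (G.inv σ) (G.inv_mem σ.2) p
  refine ⟨q, fun x => ?_⟩
  have : X.gactFun σ f x = f (X.actPt (G.invPt σ) x) := rfl
  rw [this, hp]
  exact hq (x : Fin X.n → K) x.2

/-- The action of `σ ∈ G` on the coordinate ring of `X`, as a ring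
homomorphism. -/
def gactHom (σ : ↥G.car) : ↥(coordRing X.car) →+* ↥(coordRing X.car) where
  toFun f := ⟨X.gactFun σ f, X.gactFun_mem σ f.2⟩
  map_one' := Subtype.ext (funext fun _ => rfl)
  map_mul' _ _ := Subtype.ext (funext fun _ => rfl)
  map_zero' := Subtype.ext (funext fun _ => rfl)
  map_add' _ _ := Subtype.ext (funext fun _ => rfl)

/-- The orbit of a point of `X`. -/
def orbit (x : ↥X.car) : Set (Fin X.n → K) :=
  {y | ∃ σ ∈ G.car, X.act σ (x : Fin X.n → K) = y}

/-- `d` is the maximal dimension of a `G`-orbit in `X`. -/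
def IsMaxOrbitDim (d : ℕ) : Prop :=
  (∀ x : ↥X.car, dimOfSet (X.orbit x) ≤ (d : WithBot (WithTop ℕ))) ∧
  ∃ x : ↥X.car, dimOfSet (X.orbit x) = (d : WithBot (WithTop ℕ))

end GVariety

end AlgGeo

namespace AlgGeo

section Helpers

variable {K : Type*} [Field K] {G : AlgGroup K}

lemma AlgGroup.invPt_mul_self (G : AlgGroup K) (σ : ↥G.car) : G.invPt σ * σ = 1 :=
  Subtype.ext (G.inv_mul' _ σ.2)

lemma AlgGroup.mul_invPt_self (G : AlgGroup K) (σ : ↥G.car) : σ * G.invPt σ = 1 := by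
  calc σ * G.invPt σ
      = (G.invPt (G.invPt σ) * G.invPt σ) * (σ * G.invPt σ) := by
        rw [G.invPt_mul_self, one_mul]
    _ = G.invPt (G.invPt σ) * ((G.invPt σ * σ) * G.invPt σ) := by
        simp only [mul_assoc]
    _ = 1 := by rw [G.invPt_mul_self, one_mul, G.invPt_mul_self]

lemma AlgGroup.eq_invPt_of_mul (G : AlgGroup K) {x c : ↥G.car} (h : x * c = 1) :
    x = G.invPt c := by
  calc x = x * (c * G.invPt c) := by rw [G.mul_invPt_self, mul_one]
    _ = G.invPt c := by rw [← mul_assoc, h, one_mul]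

lemma AlgGroup.invPt_invPt (G : AlgGroup K) (σ : ↥G.car) : G.invPt (G.invPt σ) = σ :=
  (G.eq_invPt_of_mul (G.mul_invPt_self σ)).symm

lemma AlgGroup.invPt_mul (G : AlgGroup K) (σ τ : ↥G.car) :
    G.invPt (σ * τ) = G.invPt τ * G.invPt σ := by
  refine (G.eq_invPt_of_mul ?_).symm
  calc (G.invPt τ * G.invPt σ) * (σ * τ)
      = G.invPt τ * ((G.invPt σ * σ) * τ) := by simp only [mul_assoc]
    _ = 1 := by rw [G.invPt_mul_self, one_mul, G.invPt_mul_self]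

variable (Xv : GVariety K G)

lemma GVariety.actPt_actPt (σ τ : ↥G.car) (x : ↥Xv.car) :
    Xv.actPt σ (Xv.actPt τ x) = Xv.actPt (σ * τ) x :=
  Subtype.ext (Xv.act_mul σ σ.2 τ τ.2 x x.2).symm

lemma GVariety.gactHom_apply (σ : ↥G.car) (f : ↥(coordRing Xv.car)) (x : ↥Xv.car) :
    ((Xv.gactHom σ f : ↥(coordRing Xv.car)) : ↥Xv.car → K) x
      = (f : ↥Xv.car → K) (Xv.actPt (G.invPt σ) x) := rfl

lemma GVariety.gactHom_gactHom (σ τ : ↥G.car) (f : ↥(coordRing Xv.car)) :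
    Xv.gactHom σ (Xv.gactHom τ f) = Xv.gactHom (σ * τ) f := by
  apply Subtype.ext; funext x
  show (f : ↥Xv.car → K) (Xv.actPt (G.invPt τ) (Xv.actPt (G.invPt σ) x))
      = (f : ↥Xv.car → K) (Xv.actPt (G.invPt (σ * τ)) x)
  rw [Xv.actPt_actPt, G.invPt_mul]

lemma GVariety.gactHom_algebraMap (σ : ↥G.car) (k : K) :
    Xv.gactHom σ (algebraMap K ↥(coordRing Xv.car) k)
      = algebraMap K ↥(coordRing Xv.car) k :=
  Subtype.ext rfl

lemma evAt_apply {N : ℕ} {V : Set (Fin N → K)} (x : ↥V) (f : ↥(coordRing V)) :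
    evAt x f = (f : ↥V → K) x := rfl

lemma aeval_eq_eval_K {n : ℕ} (v : Fin n → K) (P : MvPolynomial (Fin n) K) :
    (aeval v P : K) = eval v P := by
  rw [aeval_def, Algebra.algebraMap_self]; rfl

lemma coordRing_aeval_apply {n : ℕ} (a : Fin n → ↥(coordRing Xv.car))
    (P : MvPolynomial (Fin n) K) (z : ↥Xv.car) :
    ((aeval a P : ↥(coordRing Xv.car)) : ↥Xv.car → K) z
      = eval (fun i => (a i : ↥Xv.car → K) z) P := by
  have h : ((aeval a P : ↥(coordRing Xv.car)) : ↥Xv.car → K) z = evAtAlg z (aeval a P) := rfl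
  rw [h, comp_aeval_apply, ← aeval_eq_eval_K]
  rfl

end Helpers

set_option synthInstance.maxHeartbeats 1000000
set_option maxHeartbeats 2000000

/-- Let `G` act on the affine variety `X` with coordinate
ring `R = K[X] = K[a_1,…,a_n]`, let `f_1,…,f_s ∈ K[y_1,…,y_n]` and let `Z ⊆ X`
be the vanishing set of the `f_i(a_1,…,a_n)`.  If the set of points whose orbit
closure meets `Z` is dense in `X`, then `E := D_{a_1,…,a_n} + (f_1,…,f_s)` is an
extended Derksen ideal with `R ∩ E = {0}`. -/
theorem statement13 {K : Type*} [Field K] [IsAlgClosed K]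
    (G : AlgGroup K) (Xv : GVariety K G)
    {nn : ℕ} (a : Fin nn → ↥(coordRing Xv.car))
    (hgen : Algebra.adjoin K (Set.range a) = ⊤)
    {s : ℕ} (fp : Fin s → MvPolynomial (Fin nn) K)
    -- Z is the subvariety cut out by the f_i(a_1,…,a_n)
    (Zset : Set ↥Xv.car)
    (hZ : Zset = {x : ↥Xv.car |
      ∀ j : Fin s, ((aeval a (fp j) : ↥(coordRing Xv.car)) : ↥Xv.car → K) x = 0})
    -- the set of points whose orbit closure meets Z is dense in X
    (hdense : Xv.car ⊆ zclosure (Subtype.val ''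
      {x : ↥Xv.car | ∃ z : ↥Xv.car,
        (z : Fin Xv.n → K) ∈ zclosure (Xv.orbit x) ∧ z ∈ Zset}))
    -- the Derksen ideal and the ideal E
    (D E : Ideal (MvPolynomial (Fin nn) ↥(coordRing Xv.car)))
    (hD : D = ⨅ σ : ↥G.car, Ideal.span (Set.range fun i : Fin nn =>
      (X i : MvPolynomial (Fin nn) ↥(coordRing Xv.car)) - C (Xv.gactHom σ (a i))))
    (hE : E = D ⊔ Ideal.span (Set.range fun j : Fin s =>
      MvPolynomial.map (algebraMap K ↥(coordRing Xv.car)) (fp j))) :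
    -- E is an extended Derksen ideal with R ∩ E = {0}:
    (∀ σ : ↥G.car, ∀ F ∈ E, MvPolynomial.map (Xv.gactHom σ) F ∈ E) ∧
    D ≤ E ∧
    (∀ c : ↥(coordRing Xv.car), C c ∈ E → c = 0) := by
  have hDle : D ≤ E := by rw [hE]; exact le_sup_left
  -- G-stability of D
  have hmapD : ∀ σ : ↥G.car, ∀ d ∈ D, MvPolynomial.map (Xv.gactHom σ) d ∈ D := by
    intro σ d hd
    rw [hD, Ideal.mem_iInf]
    intro τ
    rw [hD, Ideal.mem_iInf] at hd
    have hd' := hd (G.invPt σ * τ)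
    have key : Ideal.map (MvPolynomial.map (Xv.gactHom σ))
        (Ideal.span (Set.range fun i : Fin nn =>
          (X i : MvPolynomial (Fin nn) ↥(coordRing Xv.car))
            - C (Xv.gactHom (G.invPt σ * τ) (a i))))
        ≤ Ideal.span (Set.range fun i : Fin nn =>
          (X i : MvPolynomial (Fin nn) ↥(coordRing Xv.car)) - C (Xv.gactHom τ (a i))) := by
      rw [Ideal.map_span]
      refine Ideal.span_le.mpr ?_
      rintro _ ⟨_, ⟨i, rfl⟩, rfl⟩
      refine Ideal.subset_span ⟨i, ?_⟩
      have : σ * (G.invPt σ * τ) = τ := by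
        rw [← mul_assoc, G.mul_invPt_self, one_mul]
      simp [map_sub, MvPolynomial.map_X, MvPolynomial.map_C, Xv.gactHom_gactHom, this]
    exact key (Ideal.mem_map_of_mem _ hd')
  have hmapS : ∀ σ : ↥G.car,
      Ideal.map (MvPolynomial.map (Xv.gactHom σ))
        (Ideal.span (Set.range fun j : Fin s =>
          MvPolynomial.map (algebraMap K ↥(coordRing Xv.car)) (fp j)))
      ≤ Ideal.span (Set.range fun j : Fin s =>
          MvPolynomial.map (algebraMap K ↥(coordRing Xv.car)) (fp j)) := by
    intro σ
    rw [Ideal.map_span]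
    refine Ideal.span_le.mpr ?_
    rintro _ ⟨_, ⟨j, rfl⟩, rfl⟩
    refine Ideal.subset_span ⟨j, ?_⟩
    rw [MvPolynomial.map_map]
    have hcomp : (Xv.gactHom σ).comp (algebraMap K ↥(coordRing Xv.car))
        = algebraMap K ↥(coordRing Xv.car) :=
      RingHom.ext fun k => Xv.gactHom_algebraMap σ k
    rw [hcomp]
  refine ⟨?_, hDle, ?_⟩
  · -- G-stability of E
    intro σ F hF
    have : Ideal.map (MvPolynomial.map (Xv.gactHom σ)) E ≤ E := by
      rw [hE, Ideal.map_sup]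
      refine sup_le_sup ?_ (hmapS σ)
      exact Ideal.map_le_iff_le_comap.mpr (fun d hd => hmapD σ d hd)
    exact this (Ideal.mem_map_of_mem _ hF)
  · -- R ∩ E = 0
    intro c hc
    rw [hE] at hc
    obtain ⟨d, hd, g, hg, hdg⟩ := Submodule.mem_sup.mp hc
    -- Step 1: c vanishes at every point whose orbit closure meets Z
    have hM : ∀ x : ↥Xv.car,
        (∃ z : ↥Xv.car, (z : Fin Xv.n → K) ∈ zclosure (Xv.orbit x) ∧ z ∈ Zset) →
        (c : ↥Xv.car → K) x = 0 := by
      rintro x ⟨z, hz1, hz2⟩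
      set Φ : MvPolynomial (Fin nn) ↥(coordRing Xv.car) →+* MvPolynomial (Fin nn) K :=
        MvPolynomial.map (evAt x) with hΦ
      set P : MvPolynomial (Fin nn) K := Φ g with hPdef
      have hevAtAlg : (evAt x).comp (algebraMap K ↥(coordRing Xv.car)) = RingHom.id K := by
        ext k; rfl
      -- P lies in the ideal generated by the f_j
      have hPmem : P ∈ Ideal.span (Set.range fp) := by
        have h1 := Ideal.mem_map_of_mem Φ hg
        rw [Ideal.map_span] at h1
        refine Ideal.span_le.mpr ?_ h1
        rintro _ ⟨_, ⟨j, rfl⟩, rfl⟩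
        have h2 : Φ (MvPolynomial.map (algebraMap K ↥(coordRing Xv.car)) (fp j)) = fp j := by
          rw [hΦ, MvPolynomial.map_map, hevAtAlg, MvPolynomial.map_id]
        rw [h2]
        exact Ideal.subset_span ⟨j, rfl⟩
      set rP : ↥(coordRing Xv.car) := aeval a P with hrPdef
      -- rP vanishes at z
      have hrPZ : (rP : ↥Xv.car → K) z = 0 := by
        have h1 := Ideal.mem_map_of_mem (aeval a : MvPolynomial (Fin nn) K →ₐ[K] _).toRingHom hPmem
        rw [Ideal.map_span] at h1
        have hker : Ideal.span ((aeval a : MvPolynomial (Fin nn) K →ₐ[K] _).toRingHom ''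
            Set.range fp) ≤ RingHom.ker (evAt z) := by
          refine Ideal.span_le.mpr ?_
          rintro _ ⟨_, ⟨j, rfl⟩, rfl⟩
          have := (hZ ▸ hz2 : z ∈ {x : ↥Xv.car |
            ∀ j : Fin s, ((aeval a (fp j) : ↥(coordRing Xv.car)) : ↥Xv.car → K) x = 0}) j
          exact RingHom.mem_ker.mpr this
        exact RingHom.mem_ker.mp (hker h1)
      -- for every w in the orbit of x, c x equals rP at w
      have horb : ∀ w : ↥Xv.car, (w : Fin Xv.n → K) ∈ Xv.orbit x →
          (c : ↥Xv.car → K) x = (rP : ↥Xv.car → K) w := by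
        rintro w ⟨σv, hσv, hw⟩
        set σ' : ↥G.car := ⟨σv, hσv⟩ with hσ'
        have hwpt : w = Xv.actPt σ' x := Subtype.ext hw.symm
        set σ : ↥G.car := G.invPt σ' with hσ
        have hwpt2 : w = Xv.actPt (G.invPt σ) x := by rw [hσ, G.invPt_invPt]; exact hwpt
        set ψ : MvPolynomial (Fin nn) ↥(coordRing Xv.car) →+* K :=
          (MvPolynomial.eval (fun i => (a i : ↥Xv.car → K) w)).comp Φ with hψ
        have hψd : ψ d = 0 := by
          rw [hD, Ideal.mem_iInf] at hd
          have hdσ := hd σ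
          have hker : Ideal.span (Set.range fun i : Fin nn =>
              (X i : MvPolynomial (Fin nn) ↥(coordRing Xv.car)) - C (Xv.gactHom σ (a i)))
              ≤ RingHom.ker ψ := by
            refine Ideal.span_le.mpr ?_
            rintro _ ⟨i, rfl⟩
            refine RingHom.mem_ker.mpr ?_
            have : ψ ((X i : MvPolynomial (Fin nn) ↥(coordRing Xv.car))
                - C (Xv.gactHom σ (a i)))
                = (a i : ↥Xv.car → K) w - evAt x (Xv.gactHom σ (a i)) := by
              simp [hψ, hΦ]
            rw [this, evAt_apply, Xv.gactHom_apply, ← hwpt2, sub_self]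
          exact RingHom.mem_ker.mp (hker hdσ)
        have hψc : ψ (C c) = (c : ↥Xv.car → K) x := by
          simp [hψ, hΦ, evAt_apply]
        have hψg : ψ g = (rP : ↥Xv.car → K) w := by
          rw [hψ, RingHom.comp_apply, ← hPdef, hrPdef, coordRing_aeval_apply]
        have := congrArg ψ hdg
        rw [map_add, hψd, hψc, hψg, zero_add] at this
        exact this.symm
      -- pass to the closure of the orbit
      obtain ⟨QP, hQP⟩ := rP.2
      have hQX : (MvPolynomial.C ((c : ↥Xv.car → K) x) - QP) ∈
          vanishingIdeal (Xv.orbit x) := by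
        intro w hworb
        have hwmem : w ∈ Xv.car := by
          obtain ⟨σv, hσv, hw⟩ := hworb
          rw [← hw]; exact Xv.act_mem hσv x.2
        have := horb ⟨w, hwmem⟩ hworb
        rw [map_sub, eval_C, ← hQP ⟨w, hwmem⟩, ← this, sub_self]
      have hzq := hz1 (MvPolynomial.C ((c : ↥Xv.car → K) x) - QP) hQX
      rw [map_sub, eval_C, ← hQP z, hrPZ, sub_zero] at hzq
      exact hzq
    -- Step 2: density
    obtain ⟨pc, hpc⟩ := c.2
    have hpcvan : pc ∈ vanishingIdeal (Subtype.val ''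
        {x : ↥Xv.car | ∃ z : ↥Xv.car,
          (z : Fin Xv.n → K) ∈ zclosure (Xv.orbit x) ∧ z ∈ Zset}) := by
      rintro _ ⟨m, hm, rfl⟩
      rw [← hpc m]
      exact hM m hm
    apply Subtype.ext; funext x
    have hx := hdense x.2 pc hpcvan
    rw [hpc x]
    exact hx

end AlgGeo
end
end
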